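/- arXiv:2306.00469 — 8 statements merged into one kernel-verified Lean document; each statement's English description precedes it below -/
import Mathlib

section
/- Let λ > 0, let x_1,…,x_n ∈ ℝ^p, y_1,…,y_n ∈ ℝ, let X be the n×p matrix with i-th row x_iᵀ, and let D = (1/n)·Σ_{i=1}^n y_i x_i x_iᵀ. Let G = λ I_n + n^{-1} (X Xᵀ) ∘ (X Xᵀ), where ∘ denotes the Hadamard (entrywise) product; G is invertible. Let w = G^{-1} d ∈ ℝ^n, where d_i = (1/n)·x_iᵀ D x_i, and set B̂ = λ^{-1} D − λ^{-1} Xᵀ diag(w) X. Then B̂ is a symmetric matrix and B̂ is the unique minimizer over all p×p real matrices B of the ridge quadratic regression objective F(B) = (1/(2n)) Σ_{i=1}^n (y_i − x_iᵀ B x_i)² + (λ/2)‖B‖₂². -/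
open Matrix

/-- rotate three nested sums: innermost to outermost -/
private lemma sum_rot3 {α β γ : Type*} [Fintype α] [Fintype β] [Fintype γ]
    (f : α → β → γ → ℝ) :
    ∑ i, ∑ j, ∑ k, f i j k = ∑ k, ∑ i, ∑ j, f i j k := by
  calc ∑ i, ∑ j, ∑ k, f i j k = ∑ i, ∑ k, ∑ j, f i j k :=
        Finset.sum_congr rfl fun i _ => Finset.sum_comm
    _ = ∑ k, ∑ i, ∑ j, f i j k := Finset.sum_comm

private lemma sum_rot4 {α β γ δ : Type*} [Fintype α] [Fintype β] [Fintype γ] [Fintype δ]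
    (f : α → β → γ → δ → ℝ) :
    ∑ i, ∑ j, ∑ a, ∑ b, f i j a b = ∑ a, ∑ b, ∑ i, ∑ j, f i j a b := by
  calc ∑ i, ∑ j, ∑ a, ∑ b, f i j a b
      = ∑ i, ∑ b, ∑ j, ∑ a, f i j a b :=
        Finset.sum_congr rfl fun i _ => sum_rot3 fun j a b => f i j a b
    _ = ∑ b, ∑ i, ∑ j, ∑ a, f i j a b := Finset.sum_comm
    _ = ∑ b, ∑ a, ∑ i, ∑ j, f i j a b :=
        Finset.sum_congr rfl fun b _ => sum_rot3 fun i j a => f i j a b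
    _ = ∑ a, ∑ b, ∑ i, ∑ j, f i j a b := Finset.sum_comm

/-- the closed-form ridge quadratic regression solution
`B̂ = λ⁻¹ D − λ⁻¹ Xᵀ diag(w) X` is symmetric and is the unique minimizer of the
ridge quadratic regression objective; moreover `G` is invertible. -/
theorem stmt_0 (n p : ℕ) (hn : 0 < n) (l : ℝ) (hl : 0 < l)
    (x : Fin n → Fin p → ℝ) (y : Fin n → ℝ)
    (X : Matrix (Fin n) (Fin p) ℝ) (hX : ∀ i j, X i j = x i j)
    (D : Matrix (Fin p) (Fin p) ℝ)
    (hD : D = (n : ℝ)⁻¹ • ∑ i, y i • vecMulVec (x i) (x i))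
    (G : Matrix (Fin n) (Fin n) ℝ)
    (hG : G = l • (1 : Matrix (Fin n) (Fin n) ℝ) +
      (n : ℝ)⁻¹ • ((X * Xᵀ).hadamard (X * Xᵀ)))
    (w : Fin n → ℝ)
    (hw : w = G⁻¹.mulVec (fun i => (n : ℝ)⁻¹ * (x i ⬝ᵥ D.mulVec (x i))))
    (Bhat : Matrix (Fin p) (Fin p) ℝ)
    (hB : Bhat = l⁻¹ • D - l⁻¹ • (Xᵀ * diagonal w * X))
    (F : Matrix (Fin p) (Fin p) ℝ → ℝ)
    (hF : ∀ B, F B = (2 * n : ℝ)⁻¹ * ∑ i, (y i - x i ⬝ᵥ B.mulVec (x i)) ^ 2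
      + (l / 2) * ∑ j, ∑ k, (B j k) ^ 2) :
    IsUnit G.det ∧ Bhatᵀ = Bhat ∧ (∀ B, F Bhat ≤ F B) ∧
      (∀ B, (∀ C, F B ≤ F C) → B = Bhat) := by
  have hn' : (n : ℝ) ≠ 0 := Nat.cast_ne_zero.mpr hn.ne'
  have hl' : l ≠ 0 := ne_of_gt hl
  -- the quadratic form
  set q : Matrix (Fin p) (Fin p) ℝ → Fin n → ℝ := fun B i => x i ⬝ᵥ B.mulVec (x i) with hqdef
  have hq' : ∀ B i, x i ⬝ᵥ B.mulVec (x i) = q B i := fun _ _ => rfl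
  have hqe : ∀ B i, q B i = ∑ j, ∑ k, x i j * B j k * x i k := by
    intro B i
    simp only [hqdef, dotProduct, mulVec, Finset.mul_sum]
    exact Finset.sum_congr rfl fun j _ => Finset.sum_congr rfl fun k _ => by ring
  -- entry formulas
  have hDe : ∀ j k, D j k = (n : ℝ)⁻¹ * ∑ i, y i * (x i j * x i k) := by
    intro j k
    rw [hD]
    simp only [Matrix.smul_apply, Matrix.sum_apply, vecMulVec_apply, smul_eq_mul]
  have hMe : ∀ a b, (Xᵀ * diagonal w * X) a b = ∑ i, w i * (x i a * x i b) := by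
    intro a b
    simp only [Matrix.mul_apply, Matrix.transpose_apply, Matrix.diagonal_apply, hX,
      mul_ite, mul_zero, ite_mul, zero_mul, Finset.sum_ite_eq', Finset.mem_univ, if_true]
    exact Finset.sum_congr rfl fun i _ => by ring
  have hGe : ∀ i j, G i j = (if i = j then l else 0) + (n : ℝ)⁻¹ * (x i ⬝ᵥ x j) ^ 2 := by
    intro i j
    rw [hG]
    simp only [Matrix.add_apply, Matrix.smul_apply, Matrix.hadamard_apply, Matrix.one_apply,
      smul_eq_mul, Matrix.mul_apply, Matrix.transpose_apply, hX, mul_ite, mul_one, mul_zero]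
    rw [sq, dotProduct]
  -- the Hadamard quadratic form identity
  have hquad : ∀ v : Fin n → ℝ,
      (∑ i, ∑ j, (v i * v j) * (x i ⬝ᵥ x j) ^ 2)
        = ∑ a, ∑ b, (∑ i, v i * (x i a * x i b)) ^ 2 := by
    intro v
    calc ∑ i, ∑ j, (v i * v j) * (x i ⬝ᵥ x j) ^ 2
        = ∑ i, ∑ j, ∑ a, ∑ b, (v i * (x i a * x i b)) * (v j * (x j a * x j b)) := by
          refine Finset.sum_congr rfl fun i _ => Finset.sum_congr rfl fun j _ => ?_
          rw [sq, dotProduct, Finset.sum_mul_sum, Finset.mul_sum]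
          refine Finset.sum_congr rfl fun a _ => ?_
          rw [Finset.mul_sum]
          exact Finset.sum_congr rfl fun b _ => by ring
      _ = ∑ a, ∑ b, ∑ i, ∑ j, (v i * (x i a * x i b)) * (v j * (x j a * x j b)) :=
          sum_rot4 _
      _ = ∑ a, ∑ b, (∑ i, v i * (x i a * x i b)) ^ 2 := by
          refine Finset.sum_congr rfl fun a _ => Finset.sum_congr rfl fun b _ => ?_
          rw [sq, Finset.sum_mul_sum]
  -- quadratic form of G
  have hform : ∀ v : Fin n → ℝ, v ⬝ᵥ G.mulVec v
      = l * (∑ i, v i ^ 2) + (n : ℝ)⁻¹ * ∑ a, ∑ b, (∑ i, v i * (x i a * x i b)) ^ 2 := by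
    intro v
    rw [← hquad v]
    have h1 : v ⬝ᵥ G.mulVec v = ∑ i, ∑ j, v i * (G i j * v j) := by
      simp only [dotProduct, mulVec, Finset.mul_sum]
    rw [h1]
    have h2 : ∀ i, ∑ j, v i * (G i j * v j)
        = l * v i ^ 2 + ∑ j, (n : ℝ)⁻¹ * ((v i * v j) * (x i ⬝ᵥ x j) ^ 2) := by
      intro i
      have h3 : ∀ j, v i * (G i j * v j)
          = (if i = j then l * (v i * v j) else 0)
            + (n : ℝ)⁻¹ * ((v i * v j) * (x i ⬝ᵥ x j) ^ 2) := by
        intro j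
        rw [hGe]
        by_cases h : i = j <;> simp [h] <;> ring
      rw [Finset.sum_congr rfl fun j _ => h3 j, Finset.sum_add_distrib,
        Finset.sum_ite_eq Finset.univ i (fun j => l * (v i * v j))]
      simp [sq, mul_assoc]
    rw [Finset.sum_congr rfl fun i _ => h2 i, Finset.sum_add_distrib, Finset.mul_sum,
      Finset.mul_sum]
    congr 1
    exact Finset.sum_congr rfl fun i _ => (Finset.mul_sum _ _ _).symm
  -- G is positive definite
  have hGpd : G.PosDef := by
    rw [posDef_iff_dotProduct_mulVec]
    constructor
    · ext i j
      simp only [conjTranspose_apply, star_trivial, hGe, dotProduct_comm (x j) (x i)]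
      by_cases h : i = j <;> simp [h, eq_comm]
    · intro v hv
      have hs : star v = v := by simp
      rw [hs, hform]
      have h1 : 0 < ∑ i, v i ^ 2 := by
        obtain ⟨i, hi⟩ := Function.ne_iff.mp hv
        refine Finset.sum_pos' (fun j _ => sq_nonneg _) ⟨i, Finset.mem_univ i, ?_⟩
        simpa using pow_pos (abs_pos.mpr hi) 2 |>.trans_eq (by rw [sq_abs])
      have h2 : (0:ℝ) ≤ ∑ a, ∑ b, (∑ i, v i * (x i a * x i b)) ^ 2 :=
        Finset.sum_nonneg fun a _ => Finset.sum_nonneg fun b _ => sq_nonneg _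
      have h3 : (0:ℝ) < (n : ℝ)⁻¹ := by positivity
      nlinarith [mul_pos hl h1]
  have hdet : IsUnit G.det := isUnit_iff_ne_zero.mpr hGpd.det_pos.ne'
  -- G w = d
  have hGw : G.mulVec w = fun i => (n : ℝ)⁻¹ * (x i ⬝ᵥ D.mulVec (x i)) := by
    rw [hw, Matrix.mulVec_mulVec, Matrix.mul_nonsing_inv G hdet, Matrix.one_mulVec]
  have hGwi : ∀ i, l * w i + (n : ℝ)⁻¹ * ∑ j, (x i ⬝ᵥ x j) ^ 2 * w j
      = (n : ℝ)⁻¹ * q D i := by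
    intro i
    have h0 := congrFun hGw i
    have h1 : (G.mulVec w) i = ∑ j, G i j * w j := rfl
    have h2 : ∑ j, G i j * w j = l * w i + (n : ℝ)⁻¹ * ∑ j, (x i ⬝ᵥ x j) ^ 2 * w j := by
      have h3 : ∀ j, G i j * w j
          = (if i = j then l * w j else 0) + (n : ℝ)⁻¹ * ((x i ⬝ᵥ x j) ^ 2 * w j) := by
        intro j
        rw [hGe]
        by_cases h : i = j <;> simp [h] <;> ring
      rw [Finset.sum_congr rfl fun j _ => h3 j, Finset.sum_add_distrib,
        Finset.sum_ite_eq Finset.univ i (fun j => l * w j), ← Finset.mul_sum]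
      simp
    rw [h1, h2] at h0
    exact h0
  -- q of the matrix Xᵀ diag(w) X
  have hqM : ∀ i, q (Xᵀ * diagonal w * X) i = ∑ j, (x i ⬝ᵥ x j) ^ 2 * w j := by
    intro i
    rw [hqe]
    calc ∑ a, ∑ b, x i a * (Xᵀ * diagonal w * X) a b * x i b
        = ∑ a, ∑ b, ∑ j, w j * ((x i a * x j a) * (x i b * x j b)) := by
          refine Finset.sum_congr rfl fun a _ => Finset.sum_congr rfl fun b _ => ?_
          rw [hMe]
          simp only [Finset.mul_sum, Finset.sum_mul]
          exact Finset.sum_congr rfl fun j _ => by ring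
      _ = ∑ j, ∑ a, ∑ b, w j * ((x i a * x j a) * (x i b * x j b)) := sum_rot3 _
      _ = ∑ j, (x i ⬝ᵥ x j) ^ 2 * w j := by
          refine Finset.sum_congr rfl fun j _ => ?_
          rw [sq, dotProduct, Finset.sum_mul_sum]
          simp only [Finset.sum_mul, Finset.mul_sum]
          exact Finset.sum_congr rfl fun a _ => Finset.sum_congr rfl fun b _ => by ring
  -- q Bhat = n • w
  have hqBhat : ∀ i, q Bhat i = l⁻¹ * q D i - l⁻¹ * q (Xᵀ * diagonal w * X) i := by
    intro i
    simp only [hqe, hB, Matrix.sub_apply, Matrix.smul_apply, smul_eq_mul, Finset.mul_sum]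
    rw [← Finset.sum_sub_distrib]
    refine Finset.sum_congr rfl fun a _ => ?_
    rw [← Finset.sum_sub_distrib]
    exact Finset.sum_congr rfl fun b _ => by ring
  have hqB : ∀ i, q Bhat i = n * w i := by
    intro i
    have h0 := hGwi i
    have hqDi : q D i = (n : ℝ) * (l * w i) + ∑ j, (x i ⬝ᵥ x j) ^ 2 * w j := by
      field_simp at h0
      linarith
    rw [hqBhat i, hqDi, hqM i]
    field_simp
    ring
  -- l·Bhat entrywise
  have hBe : ∀ j k, l * Bhat j k = D j k - ∑ i, w i * (x i j * x i k) := by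
    intro j k
    rw [hB]
    simp only [Matrix.sub_apply, Matrix.smul_apply, smul_eq_mul, hMe]
    field_simp
  -- stationarity
  have hstat : ∀ j k, l * Bhat j k
      + (n : ℝ)⁻¹ * ∑ i, (q Bhat i - y i) * (x i j * x i k) = 0 := by
    intro j k
    have e1 : ∑ i, (q Bhat i - y i) * (x i j * x i k)
        = (n : ℝ) * (∑ i, w i * (x i j * x i k)) - ∑ i, y i * (x i j * x i k) := by
      rw [Finset.mul_sum, ← Finset.sum_sub_distrib]
      refine Finset.sum_congr rfl fun i _ => ?_
      rw [hqB]
      ring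
    rw [hBe, hDe, e1]
    field_simp
    ring
  -- linearity of q differences
  have hqsub : ∀ B i, q B i - q Bhat i = ∑ j, ∑ k, x i j * (B j k - Bhat j k) * x i k := by
    intro B i
    rw [hqe, hqe, ← Finset.sum_sub_distrib]
    refine Finset.sum_congr rfl fun j _ => ?_
    rw [← Finset.sum_sub_distrib]
    exact Finset.sum_congr rfl fun k _ => by ring
  -- the key expansion identity
  have key : ∀ B, F B = F Bhat + (2 * (n : ℝ))⁻¹ * (∑ i, (q B i - q Bhat i) ^ 2)
      + (l / 2) * (∑ j, ∑ k, (B j k - Bhat j k) ^ 2) := by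
    intro B
    have e1 : ∑ i, (y i - q B i) ^ 2
        = ∑ i, (y i - q Bhat i) ^ 2 + ∑ i, (q B i - q Bhat i) ^ 2
          + 2 * ∑ i, (q Bhat i - y i) * (q B i - q Bhat i) := by
      rw [Finset.mul_sum, ← Finset.sum_add_distrib, ← Finset.sum_add_distrib]
      exact Finset.sum_congr rfl fun i _ => by ring
    have e2 : ∑ j, ∑ k, (B j k) ^ 2
        = ∑ j, ∑ k, (Bhat j k) ^ 2 + ∑ j, ∑ k, (B j k - Bhat j k) ^ 2
          + 2 * ∑ j, ∑ k, (B j k - Bhat j k) * Bhat j k := by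
      rw [Finset.mul_sum, ← Finset.sum_add_distrib, ← Finset.sum_add_distrib]
      refine Finset.sum_congr rfl fun j _ => ?_
      rw [Finset.mul_sum, ← Finset.sum_add_distrib, ← Finset.sum_add_distrib]
      exact Finset.sum_congr rfl fun k _ => by ring
    have swap : ∑ i, (q Bhat i - y i) * (q B i - q Bhat i)
        = ∑ j, ∑ k, (B j k - Bhat j k) * (∑ i, (q Bhat i - y i) * (x i j * x i k)) := by
      calc ∑ i, (q Bhat i - y i) * (q B i - q Bhat i)
          = ∑ i, ∑ j, ∑ k, (q Bhat i - y i) * (x i j * (B j k - Bhat j k) * x i k) := by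
            refine Finset.sum_congr rfl fun i _ => ?_
            rw [hqsub B i, Finset.mul_sum]
            refine Finset.sum_congr rfl fun j _ => ?_
            rw [Finset.mul_sum]
        _ = ∑ j, ∑ k, ∑ i, (q Bhat i - y i) * (x i j * (B j k - Bhat j k) * x i k) :=
            (sum_rot3 fun j k i => (q Bhat i - y i) * (x i j * (B j k - Bhat j k) * x i k)).symm
        _ = ∑ j, ∑ k, (B j k - Bhat j k) * (∑ i, (q Bhat i - y i) * (x i j * x i k)) := by
            refine Finset.sum_congr rfl fun j _ => Finset.sum_congr rfl fun k _ => ?_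
            rw [Finset.mul_sum]
            exact Finset.sum_congr rfl fun i _ => by ring
    have ecross : (n : ℝ)⁻¹ * (∑ i, (q Bhat i - y i) * (q B i - q Bhat i))
        + l * (∑ j, ∑ k, (B j k - Bhat j k) * Bhat j k) = 0 := by
      rw [swap, Finset.mul_sum, Finset.mul_sum, ← Finset.sum_add_distrib]
      refine Finset.sum_eq_zero fun j _ => ?_
      rw [Finset.mul_sum, Finset.mul_sum, ← Finset.sum_add_distrib]
      refine Finset.sum_eq_zero fun k _ => ?_
      have h := hstat j k
      linear_combination (B j k - Bhat j k) * h
    rw [hF, hF]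
    simp only [hq']
    rw [e1, e2]
    have h2n : (2 * (n:ℝ))⁻¹ = 2⁻¹ * (n:ℝ)⁻¹ := by rw [mul_inv]
    rw [h2n]
    linear_combination ecross
  refine ⟨hdet, ?_, ?_, ?_⟩
  · -- symmetry
    ext j k
    rw [transpose_apply]
    have e : D k j = D j k := by
      rw [hDe, hDe]
      congr 1
      exact Finset.sum_congr rfl fun i _ => by ring
    have e2 : (∑ i, w i * (x i k * x i j)) = ∑ i, w i * (x i j * x i k) :=
      Finset.sum_congr rfl fun i _ => by ring
    have h : l * Bhat k j = l * Bhat j k := by rw [hBe, hBe, e, e2]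
    exact mul_left_cancel₀ hl' h
  · -- minimality
    intro B
    rw [key B]
    have h1 : (0:ℝ) ≤ ∑ i, (q B i - q Bhat i) ^ 2 :=
      Finset.sum_nonneg fun i _ => sq_nonneg _
    have h2 : (0:ℝ) ≤ ∑ j, ∑ k, (B j k - Bhat j k) ^ 2 :=
      Finset.sum_nonneg fun j _ => Finset.sum_nonneg fun k _ => sq_nonneg _
    have h3 : (0:ℝ) < (2 * (n:ℝ)) := by positivity
    nlinarith [inv_nonneg.mpr h3.le]
  · -- uniqueness
    intro B hBmin
    have h0 := hBmin Bhat
    rw [key B] at h0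
    have h1 : (0:ℝ) ≤ ∑ i, (q B i - q Bhat i) ^ 2 :=
      Finset.sum_nonneg fun i _ => sq_nonneg _
    have h2 : (0:ℝ) ≤ ∑ j, ∑ k, (B j k - Bhat j k) ^ 2 :=
      Finset.sum_nonneg fun j _ => Finset.sum_nonneg fun k _ => sq_nonneg _
    have h3 : (0:ℝ) ≤ (2 * (n:ℝ))⁻¹ := by positivity
    have hS : ∑ j, ∑ k, (B j k - Bhat j k) ^ 2 = 0 := by
      nlinarith [mul_nonneg h3 h1]
    have hS2 := (Finset.sum_eq_zero_iff_of_nonneg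
      (fun j _ => Finset.sum_nonneg fun k _ => sq_nonneg (B j k - Bhat j k))).mp hS
    ext j k
    have hS3 := (Finset.sum_eq_zero_iff_of_nonneg
      (fun k _ => sq_nonneg (B j k - Bhat j k))).mp (hS2 j (Finset.mem_univ j)) k
      (Finset.mem_univ k)
    have := pow_eq_zero_iff (n := 2) (by norm_num) |>.mp hS3
    linarith [this]
end

section
/- Let λ > 0, let x_1,…,x_n ∈ ℝ^p, y_1,…,y_n ∈ ℝ, let X be the n×p matrix with i-th row x_iᵀ, and let D = (1/n)·Σ_{i=1}^n y_i x_i x_iᵀ. Let G = λ I_n + n^{-1} (X Xᵀ) ∘ (X Xᵀ), let w = G^{-1} d where d_i = (1/n)·x_iᵀ D x_i, and set B̂ = λ^{-1} D − λ^{-1} Xᵀ diag(w) X. Then B̂ satisfies the normal equation (1/n) Σ_{i=1}^n (x_iᵀ B̂ x_i − y_i) x_i x_iᵀ + λ B̂ = D − D = 0, i.e., (1/n) Σ_{i=1}^n (x_iᵀ B̂ x_i) x_i x_iᵀ + λ B̂ = D. -/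
open Matrix

private lemma vecMulVec_mulVec' {p : ℕ} (a b v : Fin p → ℝ) :
    (vecMulVec a b) *ᵥ v = (b ⬝ᵥ v) • a := by
  ext i
  simp only [mulVec, dotProduct, vecMulVec_apply, Pi.smul_apply, smul_eq_mul,
    Finset.sum_mul]
  exact Finset.sum_congr rfl fun k _ => by ring

private lemma sum_mulVec' {n p : ℕ} (A : Fin n → Matrix (Fin p) (Fin p) ℝ)
    (v : Fin p → ℝ) : (∑ j, A j) *ᵥ v = ∑ j, A j *ᵥ v := by
  ext i
  simp only [mulVec, dotProduct, Matrix.sum_apply, Finset.sum_apply, Finset.sum_mul]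
  rw [Finset.sum_comm]

private lemma dotProduct_sum' {n p : ℕ} (v : Fin p → ℝ) (f : Fin n → Fin p → ℝ) :
    v ⬝ᵥ (∑ j, f j) = ∑ j, v ⬝ᵥ f j := by
  simp only [dotProduct, Finset.sum_apply, Finset.mul_sum]
  rw [Finset.sum_comm]

private lemma quad_sum' {n p : ℕ} (c : Fin n → ℝ) (u : Fin n → Fin p → ℝ)
    (v : Fin p → ℝ) :
    v ⬝ᵥ (∑ j, c j • vecMulVec (u j) (u j)) *ᵥ v = ∑ j, c j * (u j ⬝ᵥ v) ^ 2 := by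
  rw [sum_mulVec', dotProduct_sum']
  refine Finset.sum_congr rfl fun j _ => ?_
  rw [smul_mulVec, vecMulVec_mulVec', dotProduct_smul, dotProduct_smul,
    smul_eq_mul, smul_eq_mul, sq, dotProduct_comm v (u j)]

/-- the closed-form ridge solution `B̂` satisfies the normal equation
`(1/n) Σᵢ (xᵢᵀ B̂ xᵢ − yᵢ) xᵢ xᵢᵀ + λ B̂ = 0`, i.e.
`(1/n) Σᵢ (xᵢᵀ B̂ xᵢ) xᵢ xᵢᵀ + λ B̂ = D`. -/
theorem stmt_2 (n p : ℕ) (hn : 0 < n) (l : ℝ) (hl : 0 < l)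
    (x : Fin n → Fin p → ℝ) (y : Fin n → ℝ)
    (X : Matrix (Fin n) (Fin p) ℝ) (hX : ∀ i j, X i j = x i j)
    (D : Matrix (Fin p) (Fin p) ℝ)
    (hD : D = (n : ℝ)⁻¹ • ∑ i, y i • vecMulVec (x i) (x i))
    (G : Matrix (Fin n) (Fin n) ℝ)
    (hG : G = l • (1 : Matrix (Fin n) (Fin n) ℝ) +
      (n : ℝ)⁻¹ • ((X * Xᵀ).hadamard (X * Xᵀ)))
    (w : Fin n → ℝ)
    (hw : w = G⁻¹.mulVec (fun i => (n : ℝ)⁻¹ * (x i ⬝ᵥ D.mulVec (x i))))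
    (Bhat : Matrix (Fin p) (Fin p) ℝ)
    (hB : Bhat = l⁻¹ • D - l⁻¹ • (Xᵀ * diagonal w * X)) :
    (n : ℝ)⁻¹ • ∑ i, (x i ⬝ᵥ Bhat.mulVec (x i) - y i) • vecMulVec (x i) (x i)
        + l • Bhat = 0 ∧
    (n : ℝ)⁻¹ • ∑ i, (x i ⬝ᵥ Bhat.mulVec (x i)) • vecMulVec (x i) (x i)
        + l • Bhat = D := by
  have hn0 : (n : ℝ) ≠ 0 := Nat.cast_ne_zero.mpr hn.ne'
  have hl0 : l ≠ 0 := hl.ne'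
  -- G is positive definite hence invertible
  set M : Matrix (Fin n) (Fin p × Fin p) ℝ :=
    Matrix.of fun i (ab : Fin p × Fin p) =>
      Real.sqrt (n : ℝ)⁻¹ * (X i ab.1 * X i ab.2) with hM
  have hsq : Real.sqrt (n : ℝ)⁻¹ * Real.sqrt (n : ℝ)⁻¹ = (n : ℝ)⁻¹ :=
    Real.mul_self_sqrt (by positivity)
  have hMM : (n : ℝ)⁻¹ • ((X * Xᵀ).hadamard (X * Xᵀ)) = M * Mᵀ := by
    ext i j
    simp only [Matrix.smul_apply, hadamard_apply, mul_apply, transpose_apply, of_apply,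
      smul_eq_mul, hM]
    rw [Finset.sum_mul_sum, Fintype.sum_prod_type, Finset.mul_sum]
    refine Finset.sum_congr rfl fun a _ => ?_
    rw [Finset.mul_sum]
    refine Finset.sum_congr rfl fun b _ => ?_
    rw [show Real.sqrt (n:ℝ)⁻¹ * (X i a * X i b) * (Real.sqrt (n:ℝ)⁻¹ * (X j a * X j b))
        = (Real.sqrt (n:ℝ)⁻¹ * Real.sqrt (n:ℝ)⁻¹) * (X i a * X j a * (X i b * X j b)) from by
      ring, hsq]
  have hGpd : G.PosDef := by
    rw [hG, hMM]
    have h1 : (l • (1 : Matrix (Fin n) (Fin n) ℝ)).PosDef := by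
      rw [smul_one_eq_diagonal]
      exact Matrix.PosDef.diagonal fun i => hl
    exact h1.add_posSemidef (posSemidef_self_mul_conjTranspose M)
  have hGdet : IsUnit G.det := isUnit_iff_ne_zero.mpr hGpd.det_pos.ne'
  have hGw : G.mulVec w = fun i => (n : ℝ)⁻¹ * (x i ⬝ᵥ D.mulVec (x i)) := by
    rw [hw, mulVec_mulVec, mul_nonsing_inv G hGdet, one_mulVec]
  -- entries of G
  have hGij : ∀ i j, G i j = (if i = j then l else 0) + (n : ℝ)⁻¹ * (x i ⬝ᵥ x j) ^ 2 := by
    intro i j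
    rw [hG]
    simp only [Matrix.add_apply, Matrix.smul_apply, one_apply, smul_eq_mul, hadamard_apply, mul_apply,
      transpose_apply, hX, dotProduct, sq, mul_ite, mul_one, mul_zero]
  -- the weighted sample covariance form
  have hS : Xᵀ * diagonal w * X = ∑ j, w j • vecMulVec (x j) (x j) := by
    ext a b
    simp only [mul_apply, diagonal_apply, transpose_apply, Matrix.sum_apply,
      Matrix.smul_apply, vecMulVec_apply, smul_eq_mul, hX, mul_ite, mul_zero, ite_mul, zero_mul,
      Finset.sum_ite_eq', Finset.mem_univ, if_true]
    exact Finset.sum_congr rfl fun j _ => by ring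
  -- quadratic form of Bhat at x i equals n * w i
  have hkey : ∀ i, x i ⬝ᵥ Bhat.mulVec (x i) = n * w i := by
    intro i
    have hGi := congrFun hGw i
    have hGi' : l * w i + (n : ℝ)⁻¹ * ∑ j, (x i ⬝ᵥ x j) ^ 2 * w j
        = (n : ℝ)⁻¹ * (x i ⬝ᵥ D.mulVec (x i)) := by
      rw [← hGi]
      simp only [mulVec, dotProduct]
      rw [show ∑ j, G i j * w j
          = ∑ j, ((if i = j then l * w j else 0) + (n : ℝ)⁻¹ * ((x i ⬝ᵥ x j) ^ 2 * w j))
          from Finset.sum_congr rfl fun j _ => by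
            rw [hGij i j]; split <;> ring]
      rw [Finset.sum_add_distrib, Finset.sum_ite_eq Finset.univ i (fun j => l * w j),
        if_pos (Finset.mem_univ i), ← Finset.mul_sum]
      simp only [dotProduct]
    have hq : x i ⬝ᵥ (Xᵀ * diagonal w * X).mulVec (x i) = ∑ j, (x i ⬝ᵥ x j) ^ 2 * w j := by
      rw [hS, quad_sum']
      exact Finset.sum_congr rfl fun j _ => by rw [dotProduct_comm]; ring
    rw [hB]
    simp only [sub_mulVec, smul_mulVec, dotProduct_sub, dotProduct_smul,
      smul_eq_mul, hq]
    have hA : x i ⬝ᵥ D.mulVec (x i)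
        = (n : ℝ) * (l * w i) + ∑ j, (x i ⬝ᵥ x j) ^ 2 * w j := by
      field_simp at hGi'
      linarith
    rw [hA]
    field_simp
    ring
  -- second statement
  have h2 : (n : ℝ)⁻¹ • ∑ i, (x i ⬝ᵥ Bhat.mulVec (x i)) • vecMulVec (x i) (x i)
      + l • Bhat = D := by
    have hsum : (n : ℝ)⁻¹ • ∑ i, (x i ⬝ᵥ Bhat.mulVec (x i)) • vecMulVec (x i) (x i)
        = ∑ i, w i • vecMulVec (x i) (x i) := by
      rw [Finset.smul_sum]
      refine Finset.sum_congr rfl fun i _ => ?_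
      rw [hkey i, smul_smul]
      congr 1
      field_simp
    rw [hsum, hB, smul_sub, smul_smul, smul_smul, mul_inv_cancel₀ hl0, one_smul,
      one_smul, hS]
    abel
  refine ⟨?_, h2⟩
  have hsplit : (∑ i, (x i ⬝ᵥ Bhat.mulVec (x i) - y i) • vecMulVec (x i) (x i))
      = (∑ i, (x i ⬝ᵥ Bhat.mulVec (x i)) • vecMulVec (x i) (x i))
        - ∑ i, y i • vecMulVec (x i) (x i) := by
    rw [← Finset.sum_sub_distrib]
    exact Finset.sum_congr rfl fun i _ => by rw [sub_smul]
  rw [hsplit, smul_sub, sub_add_eq_add_sub, h2, hD, sub_self]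
end

section
/- Let λ > 0 and a ∈ ℝ^q with λ ≥ ‖a‖₁ = Σ_{i=1}^q |a_i|. Then the zero vector is the unique minimizer of the function b ↦ λ‖b‖_∞ + (1/2)‖b − a‖₂² on ℝ^q, where ‖b‖_∞ = max_{1≤i≤q} |b_i| and ‖·‖₂ is the Euclidean norm. -/
/-!
For `‖a‖₁ ≤ λ`, Hölder's inequality gives `⟪b, a⟫ ≤ ‖b‖_∞ ‖a‖₁ ≤ λ ‖b‖_∞`, so expanding the square
shows `F(b) ≥ F(0) + ½‖b‖₂²` for the objective `F`. Hence `0` is a minimizer, and any minimizer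
has `‖b‖₂ = 0`.
-/

open Finset

section SupNormObjective

variable {ι : Type*} [Fintype ι] [Nonempty ι]

lemma sum_mul_le_sup'_abs_mul_sum_abs (a b : ι → ℝ) :
    ∑ i, b i * a i ≤ (univ.sup' univ_nonempty fun i => |b i|) * ∑ i, |a i| := by
  set M := univ.sup' univ_nonempty fun i => |b i|
  have hbM : ∀ i, |b i| ≤ M := fun i => le_sup' (fun j => |b j|) (mem_univ i)
  calc ∑ i, b i * a i ≤ ∑ i, |b i| * |a i| :=
        sum_le_sum fun i _ => (le_abs_self _).trans (abs_mul _ _).le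
    _ ≤ ∑ i, M * |a i| := sum_le_sum fun i _ => mul_le_mul_of_nonneg_right (hbM i) (abs_nonneg _)
    _ = M * ∑ i, |a i| := (mul_sum _ _ _).symm

noncomputable def supNormObjective (l : ℝ) (a b : ι → ℝ) : ℝ :=
  l * (univ.sup' univ_nonempty fun i => |b i|) + (1 / 2) * ∑ i, (b i - a i) ^ 2

lemma supNormObjective_zero_add_le {l : ℝ} {a : ι → ℝ} (hla : ∑ i, |a i| ≤ l) (b : ι → ℝ) :
    supNormObjective l a 0 + (1 / 2) * ∑ i, b i ^ 2 ≤ supNormObjective l a b := by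
  set M := univ.sup' univ_nonempty fun i => |b i|
  have hM : 0 ≤ M :=
    (abs_nonneg _).trans (le_sup' (fun j => |b j|) (mem_univ (Classical.arbitrary ι)))
  have hba : ∑ i, b i * a i ≤ l * M :=
    (sum_mul_le_sup'_abs_mul_sum_abs a b).trans (by nlinarith)
  have hexpand : ∑ i, (b i - a i) ^ 2 = ∑ i, b i ^ 2 - 2 * ∑ i, b i * a i + ∑ i, a i ^ 2 := by
    rw [mul_sum, ← sum_sub_distrib, ← sum_add_distrib]
    exact sum_congr rfl fun i _ => by ring
  simp only [supNormObjective, Pi.zero_apply, abs_zero, sup'_const, zero_sub, neg_sq]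
  rw [hexpand]
  linarith

lemma supNormObjective_zero_le {l : ℝ} {a : ι → ℝ} (hla : ∑ i, |a i| ≤ l) (b : ι → ℝ) :
    supNormObjective l a 0 ≤ supNormObjective l a b := by
  have := supNormObjective_zero_add_le hla b
  have : 0 ≤ ∑ i, b i ^ 2 := sum_nonneg fun i _ => sq_nonneg _
  linarith

lemma eq_zero_of_supNormObjective_le {l : ℝ} {a b : ι → ℝ} (hla : ∑ i, |a i| ≤ l)
    (hb : supNormObjective l a b ≤ supNormObjective l a 0) : b = 0 := by
  have := supNormObjective_zero_add_le hla b
  have hsum : ∑ i, b i ^ 2 = 0 :=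
    le_antisymm (by linarith) (sum_nonneg fun i _ => sq_nonneg _)
  funext i
  exact pow_eq_zero_iff two_ne_zero |>.mp <|
    (sum_eq_zero_iff_of_nonneg fun i _ => sq_nonneg (b i)).mp hsum i (mem_univ i)

end SupNormObjective

theorem stmt_11_general (q : ℕ) [NeZero q] (l : ℝ) (a : Fin q → ℝ)
    (hla : ∑ i, |a i| ≤ l)
    (f : (Fin q → ℝ) → ℝ)
    (hf : ∀ b, f b = l * (Finset.univ.sup' Finset.univ_nonempty fun i => |b i|)
      + (1 / 2) * ∑ i, (b i - a i) ^ 2) :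
    (∀ b, f 0 ≤ f b) ∧ (∀ b, (∀ c, f b ≤ f c) → b = 0) := by
  obtain rfl : f = supNormObjective l a := funext hf
  exact ⟨supNormObjective_zero_le hla, fun b hb => eq_zero_of_supNormObjective_le hla (hb 0)⟩

/-- if `λ ≥ ‖a‖₁`, then `0` is the unique minimizer of
`b ↦ λ‖b‖_∞ + (1/2)‖b − a‖₂²` on `ℝ^q`. -/
theorem stmt_11 (q : ℕ) [NeZero q] (l : ℝ) (hl : 0 < l) (a : Fin q → ℝ)
    (hla : ∑ i, |a i| ≤ l)
    (f : (Fin q → ℝ) → ℝ)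
    (hf : ∀ b, f b = l * (Finset.univ.sup' Finset.univ_nonempty fun i => |b i|)
      + (1 / 2) * ∑ i, (b i - a i) ^ 2) :
    (∀ b, f 0 ≤ f b) ∧ (∀ b, (∀ c, f b ≤ f c) → b = 0) :=
  stmt_11_general q l a hla f hf
end

section
/- Let λ > 0 and a ∈ ℝ^q with λ < ‖a‖₁ = Σ_{i=1}^q |a_i|, and suppose λ₁ ≥ 0 satisfies Σ_{i=1}^q max(|a_i| − λ₁, 0) = λ. Then the vector b̂ = a − soft(a, λ₁), where soft(a, λ₁) has i-th entry sign(a_i)·max(|a_i| − λ₁, 0), is the unique minimizer of the function b ↦ λ‖b‖_∞ + (1/2)‖b − a‖₂² on ℝ^q. -/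
/-!
The residual `a - b̂ = soft(a, λ₁)` is a subgradient of `λ‖·‖_∞` at `b̂`: its entries have
total mass `λ` and are supported where `|b̂ᵢ| = λ₁ ≥ ‖b̂‖_∞`, so pairing it with `b̂` gives `λλ₁ ≥ λ‖b̂‖_∞`, while pairing it with any `b`
gives at most `λ‖b‖_∞`. Expanding the square then shows that the objective grows at least like
`½‖b - b̂‖₂²` away from `b̂`, which gives both minimality and uniqueness.
-/

open Finset

section Prox

variable {ι : Type*} [Fintype ι]

theorem sum_sq_sub_eq_add_sub (a x b : ι → ℝ) :
    ∑ i, (b i - a i) ^ 2 =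
      ∑ i, (x i - a i) ^ 2 + ∑ i, (b i - x i) ^ 2 - 2 * ∑ i, (a i - x i) * (b i - x i) := by
  rw [← sum_add_distrib, mul_sum, ← sum_sub_distrib]
  exact sum_congr rfl fun i _ => by ring

theorem eq_of_sum_sq_sub_nonpos {x y : ι → ℝ} (h : ∑ i, (x i - y i) ^ 2 ≤ 0) : x = y := by
  have hzero := (sum_eq_zero_iff_of_nonneg fun i _ => sq_nonneg (x i - y i)).mp
    (le_antisymm h (sum_nonneg fun i _ => sq_nonneg _))
  funext i
  exact sub_eq_zero.mp (pow_eq_zero_iff two_ne_zero |>.mp (hzero i (mem_univ i)))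

theorem add_half_sum_sq_le_of_subgradient (g : (ι → ℝ) → ℝ) {a x : ι → ℝ}
    (hx : ∀ b, ∑ i, (a i - x i) * (b i - x i) ≤ g b - g x) (b : ι → ℝ) :
    g x + 1 / 2 * ∑ i, (x i - a i) ^ 2 + 1 / 2 * ∑ i, (b i - x i) ^ 2 ≤
      g b + 1 / 2 * ∑ i, (b i - a i) ^ 2 := by
  rw [sum_sq_sub_eq_add_sub a x b]
  linarith [hx b]

theorem isUniqueMin_of_subgradient {f g : (ι → ℝ) → ℝ} {a x : ι → ℝ}
    (hf : ∀ b, f b = g b + 1 / 2 * ∑ i, (b i - a i) ^ 2)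
    (hx : ∀ b, ∑ i, (a i - x i) * (b i - x i) ≤ g b - g x) :
    (∀ b, f x ≤ f b) ∧ (∀ b, (∀ c, f b ≤ f c) → b = x) := by
  have hgrowth : ∀ b, f x + 1 / 2 * ∑ i, (b i - x i) ^ 2 ≤ f b := fun b => by
    rw [hf, hf]
    linarith [add_half_sum_sq_le_of_subgradient g hx b]
  refine ⟨fun b => ?_, fun b hb => eq_of_sum_sq_sub_nonpos ?_⟩
  · linarith [hgrowth b, sum_nonneg fun i (_ : i ∈ univ) => sq_nonneg (b i - x i)]
  · linarith [hgrowth b, hb x]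

end Prox

section SupNorm

variable {ι : Type*} [Fintype ι] [Nonempty ι]

def supNorm (b : ι → ℝ) : ℝ :=
  univ.sup' univ_nonempty fun i => |b i|

theorem abs_le_supNorm (b : ι → ℝ) (i : ι) : |b i| ≤ supNorm b :=
  le_sup' (fun i => |b i|) (mem_univ i)

theorem supNorm_le {b : ι → ℝ} {t : ℝ} (h : ∀ i, |b i| ≤ t) : supNorm b ≤ t :=
  sup'_le _ _ fun i _ => h i

theorem sum_mul_abs_le_sum_mul_supNorm {w : ι → ℝ} (hw : ∀ i, 0 ≤ w i) (b : ι → ℝ) :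
    ∑ i, w i * |b i| ≤ (∑ i, w i) * supNorm b := by
  rw [sum_mul]
  exact sum_le_sum fun i _ => mul_le_mul_of_nonneg_left (abs_le_supNorm b i) (hw i)

end SupNorm

section SoftThreshold

noncomputable def softThreshold (t x : ℝ) : ℝ :=
  Real.sign x * max (|x| - t) 0

theorem softThreshold_mul_le (t x y : ℝ) : softThreshold t x * y ≤ max (|x| - t) 0 * |y| := by
  unfold softThreshold
  rcases lt_trichotomy x 0 with hx | rfl | hx
  · rw [Real.sign_of_neg hx]; nlinarith [neg_abs_le y, le_max_right (|x| - t) 0]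
  · simpa using mul_nonneg (le_max_right _ _) (abs_nonneg y)
  · rw [Real.sign_of_pos hx]; nlinarith [le_abs_self y, le_max_right (|x| - t) 0]

theorem abs_sub_softThreshold_le {t : ℝ} (ht : 0 ≤ t) (x : ℝ) : |x - softThreshold t x| ≤ t := by
  unfold softThreshold
  rcases lt_trichotomy x 0 with hx | rfl | hx
  · rw [Real.sign_of_neg hx, abs_of_neg hx, abs_le]
    constructor <;> cases max_choice (-x - t) 0 <;> grind
  · simpa using ht
  · rw [Real.sign_of_pos hx, abs_of_pos hx, abs_le]
    constructor <;> cases max_choice (x - t) 0 <;> grind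

/-- On the support of `softThreshold t x` the residual `x - softThreshold t x` is `t · sign x`. -/
theorem softThreshold_mul_sub_self {t : ℝ} (ht : 0 ≤ t) (x : ℝ) :
    softThreshold t x * (x - softThreshold t x) = max (|x| - t) 0 * t := by
  unfold softThreshold
  rcases lt_trichotomy x 0 with hx | rfl | hx
  · rw [Real.sign_of_neg hx, abs_of_neg hx]
    cases max_choice (-x - t) 0 <;> grind
  · simp [max_eq_right (neg_nonpos.mpr ht)]
  · rw [Real.sign_of_pos hx, abs_of_pos hx]
    cases max_choice (x - t) 0 <;> grind

variable {ι : Type*} [Fintype ι] [Nonempty ι]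

theorem softThreshold_subgradient_supNorm {t : ℝ} (ht : 0 ≤ t) (a b : ι → ℝ) :
    let x := fun i => a i - softThreshold t (a i)
    let l := ∑ i, max (|a i| - t) 0
    ∑ i, (a i - x i) * (b i - x i) ≤ l * supNorm b - l * supNorm x := by
  intro x l
  have hl : 0 ≤ l := sum_nonneg fun i _ => le_max_right _ _
  have hpair_b : ∑ i, softThreshold t (a i) * b i ≤ l * supNorm b :=
    (sum_le_sum fun i _ => softThreshold_mul_le t (a i) (b i)).trans
      (sum_mul_abs_le_sum_mul_supNorm (fun i => le_max_right _ _) b)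
  have hpair_x : ∑ i, softThreshold t (a i) * x i = l * t := by
    rw [sum_mul]
    exact sum_congr rfl fun i _ => softThreshold_mul_sub_self ht (a i)
  have hx_le : l * supNorm x ≤ l * t :=
    mul_le_mul_of_nonneg_left (supNorm_le fun i => abs_sub_softThreshold_le ht (a i)) hl
  simp only [x, sub_sub_cancel, mul_sub, sum_sub_distrib] at hpair_x ⊢
  linarith

end SoftThreshold

theorem stmt_12_general (q : ℕ) [NeZero q] (l : ℝ) (a : Fin q → ℝ)
    (l1 : ℝ) (hl1 : 0 ≤ l1) (hsum : ∑ i, max (|a i| - l1) 0 = l)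
    (f : (Fin q → ℝ) → ℝ)
    (hf : ∀ b, f b = l * (Finset.univ.sup' Finset.univ_nonempty fun i => |b i|)
      + (1 / 2) * ∑ i, (b i - a i) ^ 2)
    (bhat : Fin q → ℝ)
    (hbhat : ∀ i, bhat i = a i - Real.sign (a i) * max (|a i| - l1) 0) :
    (∀ b, f bhat ≤ f b) ∧ (∀ b, (∀ c, f b ≤ f c) → b = bhat) := by
  obtain rfl : bhat = fun i => a i - softThreshold l1 (a i) := funext hbhat
  subst hsum
  exact isUniqueMin_of_subgradient (g := fun b => _ * supNorm b) hf
    (softThreshold_subgradient_supNorm hl1 a)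

/-- if `λ < ‖a‖₁` and `λ₁ ≥ 0` satisfies
`Σ max(|aᵢ| − λ₁, 0) = λ`, then `b̂ = a − soft(a, λ₁)` is the unique minimizer of
`b ↦ λ‖b‖_∞ + (1/2)‖b − a‖₂²` on `ℝ^q`. -/
theorem stmt_12 (q : ℕ) [NeZero q] (l : ℝ) (hl : 0 < l) (a : Fin q → ℝ)
    (hla : l < ∑ i, |a i|)
    (l1 : ℝ) (hl1 : 0 ≤ l1) (hsum : ∑ i, max (|a i| - l1) 0 = l)
    (f : (Fin q → ℝ) → ℝ)
    (hf : ∀ b, f b = l * (Finset.univ.sup' Finset.univ_nonempty fun i => |b i|)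
      + (1 / 2) * ∑ i, (b i - a i) ^ 2)
    (bhat : Fin q → ℝ)
    (hbhat : ∀ i, bhat i = a i - Real.sign (a i) * max (|a i| - l1) 0) :
    (∀ b, f bhat ≤ f b) ∧ (∀ b, (∀ c, f b ≤ f c) → b = bhat) :=
  stmt_12_general q l a l1 hl1 hsum f hf bhat hbhat
end

section
/- Let λ > 0 and a = (a_1, a_{-1}) ∈ ℝ × ℝ^{q−1} with λ ≥ |a_1| + ‖a_{-1}‖_∞, where ‖a_{-1}‖_∞ = max_{2≤i≤q}|a_i|. Then the zero vector is the unique minimizer on ℝ^q of the hybrid ℓ₁/ℓ_∞-penalized proximal objective b ↦ λ·max(|b_1|, Σ_{i=2}^q |b_i|) + (1/2)‖b − a‖₂². -/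
/-!
Expanding the square, the objective satisfies
`F(b) - F(0) = λ·max(|b₁|, ‖b₋₁‖₁) - ⟪b, a⟫ + ½‖b‖₂²`. The norm dual to
`b ↦ max(|b₁|, ‖b₋₁‖₁)` is `a ↦ |a₁| + ‖a₋₁‖_∞`, so `⟪b, a⟫ ≤ λ·max(|b₁|, ‖b₋₁‖₁)` and hence
`F(b) ≥ F(0) + ½‖b‖₂²`: zero is a minimizer, and the only one.
-/

open Finset

section HybridProx

variable {ι : Type*} [Fintype ι]

theorem mul_add_sum_mul_le_max_mul {M : ℝ} (x a₁ : ℝ) (y a₂ : ι → ℝ)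
    (hM₀ : 0 ≤ M) (hM : ∀ i, |a₂ i| ≤ M) :
    x * a₁ + ∑ i, y i * a₂ i ≤ max |x| (∑ i, |y i|) * (|a₁| + M) := by
  have h₁ : x * a₁ ≤ max |x| (∑ i, |y i|) * |a₁| :=
    calc x * a₁ ≤ |x| * |a₁| := (le_abs_self _).trans (abs_mul _ _).le
      _ ≤ _ := by gcongr; exact le_max_left _ _
  have h₂ : ∑ i, y i * a₂ i ≤ max |x| (∑ i, |y i|) * M :=
    calc ∑ i, y i * a₂ i ≤ ∑ i, |y i| * M := by
          refine sum_le_sum fun i _ => ?_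
          exact (le_abs_self _).trans ((abs_mul _ _).trans_le
            (mul_le_mul_of_nonneg_left (hM i) (abs_nonneg _)))
      _ = (∑ i, |y i|) * M := (sum_mul ..).symm
      _ ≤ _ := by gcongr; exact le_max_right _ _
  linarith

noncomputable def hybridProxObjective (l a₁ : ℝ) (a₂ : ι → ℝ) (b : ℝ × (ι → ℝ)) : ℝ :=
  l * max |b.1| (∑ i, |b.2 i|) + (1 / 2) * ((b.1 - a₁) ^ 2 + ∑ i, (b.2 i - a₂ i) ^ 2)

theorem hybridProxObjective_zero (l a₁ : ℝ) (a₂ : ι → ℝ) :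
    hybridProxObjective l a₁ a₂ 0 = (1 / 2) * (a₁ ^ 2 + ∑ i, a₂ i ^ 2) := by
  simp [hybridProxObjective]

theorem hybridProxObjective_zero_add_le {l a₁ M : ℝ} {a₂ : ι → ℝ}
    (hM₀ : 0 ≤ M) (hM : ∀ i, |a₂ i| ≤ M) (hla : |a₁| + M ≤ l) (b : ℝ × (ι → ℝ)) :
    hybridProxObjective l a₁ a₂ 0 + (1 / 2) * (b.1 ^ 2 + ∑ i, b.2 i ^ 2)
      ≤ hybridProxObjective l a₁ a₂ b := by
  have hinner := mul_add_sum_mul_le_max_mul b.1 a₁ b.2 a₂ hM₀ hM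
  have hdual : max |b.1| (∑ i, |b.2 i|) * (|a₁| + M) ≤ l * max |b.1| (∑ i, |b.2 i|) := by
    rw [mul_comm l]
    exact mul_le_mul_of_nonneg_left hla ((abs_nonneg _).trans (le_max_left _ _))
  have hexpand : ∑ i, (b.2 i - a₂ i) ^ 2
      = ∑ i, b.2 i ^ 2 - 2 * ∑ i, b.2 i * a₂ i + ∑ i, a₂ i ^ 2 := by
    rw [mul_sum, ← sum_sub_distrib, ← sum_add_distrib]
    exact sum_congr rfl fun i _ => by ring
  rw [hybridProxObjective_zero, hybridProxObjective, hexpand]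
  nlinarith

theorem Prod.eq_zero_of_sq_add_sum_sq_nonpos (b : ℝ × (ι → ℝ))
    (h : b.1 ^ 2 + ∑ i, b.2 i ^ 2 ≤ 0) : b = 0 := by
  have hsum : 0 ≤ ∑ i, b.2 i ^ 2 := sum_nonneg fun i _ => sq_nonneg _
  have hfst : b.1 ^ 2 = 0 := by nlinarith [sq_nonneg b.1]
  have hsnd : ∑ i, b.2 i ^ 2 = 0 := by nlinarith [sq_nonneg b.1]
  rw [sum_eq_zero_iff_of_nonneg fun i _ => sq_nonneg _] at hsnd
  exact Prod.ext (pow_eq_zero_iff two_ne_zero |>.mp hfst)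
    (funext fun i => pow_eq_zero_iff two_ne_zero |>.mp (hsnd i (mem_univ i)))

end HybridProx

theorem stmt_13_general (m : ℕ) [NeZero m] (l : ℝ)
    (a1 : ℝ) (a2 : Fin m → ℝ)
    (hla : |a1| + (Finset.univ.sup' Finset.univ_nonempty fun i => |a2 i|) ≤ l)
    (f : ℝ × (Fin m → ℝ) → ℝ)
    (hf : ∀ b, f b = l * max |b.1| (∑ i, |b.2 i|)
      + (1 / 2) * ((b.1 - a1) ^ 2 + ∑ i, (b.2 i - a2 i) ^ 2)) :
    (∀ b, f 0 ≤ f b) ∧ (∀ b, (∀ c, f b ≤ f c) → b = 0) := by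
  obtain rfl : f = hybridProxObjective l a1 a2 := funext hf
  have hM : ∀ i, |a2 i| ≤ univ.sup' univ_nonempty fun i => |a2 i| :=
    fun i => le_sup' (fun i => |a2 i|) (mem_univ i)
  have hgrowth := hybridProxObjective_zero_add_le ((abs_nonneg _).trans (hM 0)) hM hla
  have hsq (b : ℝ × (Fin m → ℝ)) : 0 ≤ b.1 ^ 2 + ∑ i, b.2 i ^ 2 :=
    add_nonneg (sq_nonneg _) (sum_nonneg fun i _ => sq_nonneg _)
  refine ⟨fun b => by linarith [hgrowth b, hsq b], fun b hb => ?_⟩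
  exact Prod.eq_zero_of_sq_add_sum_sq_nonpos b (by linarith [hgrowth b, hb 0])

/-- if `λ ≥ |a₁| + ‖a₋₁‖_∞`, then the zero vector is the unique
minimizer of the hybrid ℓ₁/ℓ_∞ proximal objective
`b ↦ λ·max(|b₁|, Σᵢ|b₋₁ᵢ|) + (1/2)‖b − a‖₂²` on `ℝ × ℝ^{q−1}`. -/
theorem stmt_13 (m : ℕ) [NeZero m] (l : ℝ) (hl : 0 < l)
    (a1 : ℝ) (a2 : Fin m → ℝ)
    (hla : |a1| + (Finset.univ.sup' Finset.univ_nonempty fun i => |a2 i|) ≤ l)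
    (f : ℝ × (Fin m → ℝ) → ℝ)
    (hf : ∀ b, f b = l * max |b.1| (∑ i, |b.2 i|)
      + (1 / 2) * ((b.1 - a1) ^ 2 + ∑ i, (b.2 i - a2 i) ^ 2)) :
    (∀ b, f 0 ≤ f b) ∧ (∀ b, (∀ c, f b ≤ f c) → b = 0) :=
  stmt_13_general m l a1 a2 hla f hf
end

section
/- Let λ > 0 and a = (a_1, a_{-1}) ∈ ℝ × ℝ^{q−1}. Let t* ∈ [0, λ] minimize the function t ↦ soft(a_1, t)² + Σ_{i=2}^q soft(a_i, λ − t)² over [0, λ], where soft(s, u) = sign(s)·max(|s| − u, 0). Then the vector b̂ = (soft(a_1, t*), soft(a_2, λ − t*), …, soft(a_q, λ − t*)) is a minimizer on ℝ^q of the hybrid ℓ₁/ℓ_∞-penalized proximal objective b ↦ λ·max(|b_1|, Σ_{i=2}^q |b_i|) + (1/2)‖b − a‖₂². -/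
/-!
Write `B = |soft(a₁, t*)|` and `S = Σᵢ |soft(aᵢ, λ - t*)|`. Moving `t*` by `ε` changes the
minimized function by at most `2ε(S - B) + O(ε²)`, so `t* = 0` if `B < S` and `t* = λ` if `B > S`;
in every case `λ · max(B, S) = t* B + (λ - t*) S`. Since `λ · max(|b₁|, ‖b₋₁‖₁)` is at least
`t* |b₁| + (λ - t*) ‖b₋₁‖₁`, the objective dominates a separable weighted-ℓ₁ proximal objective,
which coordinatewise soft-thresholding minimizes, and the identity above says the two objectives
agree at `b̂`.
-/

/-- Scalar soft-thresholding: `soft(s, u) = sign(s)·max(|s| − u, 0)`. -/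
noncomputable def soft (s u : ℝ) : ℝ := Real.sign s * max (|s| - u) 0

open Finset Filter Topology

lemma abs_soft {u : ℝ} (a : ℝ) (hu : 0 ≤ u) : |soft a u| = max (|a| - u) 0 := by
  rcases lt_trichotomy a 0 with ha | rfl | ha
  · simp [soft, Real.sign_of_neg ha]
  · simp [soft, hu]
  · simp [soft, Real.sign_of_pos ha]

lemma soft_of_abs_le {a u : ℝ} (h : |a| ≤ u) : soft a u = 0 := by
  simp [soft, h]

lemma soft_of_lt {a u : ℝ} (hu : 0 ≤ u) (h : u < a) : soft a u = a - u := by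
  have ha : 0 < a := hu.trans_lt h
  simp [soft, Real.sign_of_pos ha, abs_of_pos ha, h.le]

lemma soft_of_lt_neg {a u : ℝ} (hu : 0 ≤ u) (h : a < -u) : soft a u = a + u := by
  have ha : a < 0 := by linarith
  rw [soft, Real.sign_of_neg ha, abs_of_neg ha, max_eq_left (by linarith)]
  ring

/-- The hypotheses say `a - s ∈ u · ∂|·|(s)`. -/
lemma prox_abs_le_of_subgradient {a s u : ℝ} (hle : |a - s| ≤ u)
    (heq : (a - s) * s = u * |s|) (x : ℝ) :
    u * |s| + (1 / 2) * (s - a) ^ 2 ≤ u * |x| + (1 / 2) * (x - a) ^ 2 := by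
  have hx : (a - s) * x ≤ u * |x| :=
    (le_abs_self _).trans ((abs_mul _ _).trans_le (mul_le_mul_of_nonneg_right hle (abs_nonneg x)))
  nlinarith [sq_nonneg (x - s)]

lemma soft_prox_le {u : ℝ} (a : ℝ) (hu : 0 ≤ u) (x : ℝ) :
    u * |soft a u| + (1 / 2) * (soft a u - a) ^ 2 ≤ u * |x| + (1 / 2) * (x - a) ^ 2 := by
  apply prox_abs_le_of_subgradient
  · rcases le_or_gt |a| u with h | h
    · rwa [soft_of_abs_le h, sub_zero]
    rcases lt_abs.1 h with h' | h'
    · rw [soft_of_lt hu h', sub_sub_cancel, abs_of_nonneg hu]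
    · rw [soft_of_lt_neg hu (by linarith), sub_add_cancel_left, abs_neg, abs_of_nonneg hu]
  · rcases le_or_gt |a| u with h | h
    · simp [soft_of_abs_le h]
    rcases lt_abs.1 h with h' | h'
    · rw [soft_of_lt hu h', abs_of_pos (by linarith)]
      ring
    · rw [soft_of_lt_neg hu (by linarith), abs_of_neg (by linarith)]
      ring

lemma sq_max_add_le (c ε : ℝ) : max (c + ε) 0 ^ 2 ≤ (max c 0 + ε) ^ 2 := by
  rcases le_or_gt (c + ε) 0 with h | h
  · simpa [max_eq_right h] using sq_nonneg (max c 0 + ε)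
  · rw [max_eq_left h.le]
    exact pow_le_pow_left₀ h.le (by linarith [le_max_left c 0]) 2

lemma sq_soft_add_le {u ε : ℝ} (a : ℝ) (hu : 0 ≤ u) (huε : 0 ≤ u + ε) :
    soft a (u + ε) ^ 2 ≤ (|soft a u| - ε) ^ 2 := by
  rw [← sq_abs, abs_soft a huε, abs_soft a hu]
  convert sq_max_add_le (|a| - u) (-ε) using 3 <;> ring

lemma le_zero_of_forall_mul_le_mul_sq {d K r : ℝ} (hr : 0 < r)
    (h : ∀ ε ∈ Set.Ioc 0 r, ε * d ≤ K * ε ^ 2) : d ≤ 0 := by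
  have hlim : Tendsto (fun ε => K * ε) (𝓝[>] 0) (𝓝 0) := by
    simpa using ((continuous_const_mul K).tendsto 0).mono_left nhdsWithin_le_nhds
  refine ge_of_tendsto hlim ?_
  filter_upwards [Ioc_mem_nhdsGT hr] with ε hε
  have := h ε hε
  rw [← mul_le_mul_iff_of_pos_left hε.1]
  linarith

section SoftObjective

variable {ι : Type*} [Fintype ι] (a1 : ℝ) (a2 : ι → ℝ) (l : ℝ)

noncomputable def softObjective (t : ℝ) : ℝ :=
  soft a1 t ^ 2 + ∑ i, soft (a2 i) (l - t) ^ 2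

lemma softObjective_add_le {t ε : ℝ} (ht : t ∈ Set.Icc 0 l) (htε : t + ε ∈ Set.Icc 0 l) :
    softObjective a1 a2 l (t + ε) ≤ softObjective a1 a2 l t
      + ε * (2 * (∑ i, |soft (a2 i) (l - t)| - |soft a1 t|))
      + (Fintype.card ι + 1) * ε ^ 2 := by
  have h1 := sq_soft_add_le a1 ht.1 htε.1
  have h2 : ∑ i, soft (a2 i) (l - (t + ε)) ^ 2 ≤ ∑ i, (|soft (a2 i) (l - t)| + ε) ^ 2 :=
    sum_le_sum fun i _ => by
      have := sq_soft_add_le (a2 i) (u := l - t) (ε := -ε) (by linarith [ht.2]) (by linarith [htε.2])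
      rwa [sub_neg_eq_add, show l - t + -ε = l - (t + ε) by ring] at this
  have h3 : ∑ i, (|soft (a2 i) (l - t)| + ε) ^ 2
      = ∑ i, soft (a2 i) (l - t) ^ 2 + 2 * ε * ∑ i, |soft (a2 i) (l - t)|
        + Fintype.card ι * ε ^ 2 := by
    simp only [add_sq, sq_abs, sum_add_distrib, ← sum_mul, ← mul_sum, sum_const, card_univ,
      nsmul_eq_mul]
    ring
  rw [sub_sq, sq_abs] at h1
  unfold softObjective
  nlinarith

lemma mul_max_eq_of_isMinOn {tstar : ℝ} (ht : tstar ∈ Set.Icc 0 l)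
    (hmin : IsMinOn (softObjective a1 a2 l) (Set.Icc 0 l) tstar) :
    l * max |soft a1 tstar| (∑ i, |soft (a2 i) (l - tstar)|)
      = tstar * |soft a1 tstar| + (l - tstar) * ∑ i, |soft (a2 i) (l - tstar)| := by
  set B := |soft a1 tstar|
  set S := ∑ i, |soft (a2 i) (l - tstar)|
  set K : ℝ := Fintype.card ι + 1
  have hfirstOrder : ∀ ε, tstar + ε ∈ Set.Icc 0 l → 0 ≤ ε * (2 * (S - B)) + K * ε ^ 2 :=
    fun ε hε => by
      have := softObjective_add_le a1 a2 l ht hε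
      linarith [isMinOn_iff.1 hmin _ hε]
  rcases lt_trichotomy B S with hBS | hBS | hBS
  · obtain rfl : tstar = 0 := by
      by_contra hne
      have := le_zero_of_forall_mul_le_mul_sq (d := 2 * (S - B)) (K := K)
        (lt_of_le_of_ne ht.1 (Ne.symm hne)) fun ε hε => by
          have := hfirstOrder (-ε) ⟨by linarith [hε.2], by linarith [hε.1, ht.2]⟩
          linarith
      linarith
    rw [max_eq_right hBS.le]
    ring
  · rw [hBS, max_self]
    ring
  · obtain rfl : tstar = l := by
      by_contra hne
      have := le_zero_of_forall_mul_le_mul_sq (d := 2 * (B - S)) (K := K)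
        (sub_pos.2 (lt_of_le_of_ne ht.2 hne)) fun ε hε => by
          have := hfirstOrder ε ⟨by linarith [hε.1, ht.1], by linarith [hε.2]⟩
          linarith
      linarith
    rw [max_eq_left hBS.le]
    ring

end SoftObjective

theorem stmt_14_general (m : ℕ) (l : ℝ)
    (a1 : ℝ) (a2 : Fin m → ℝ)
    (tstar : ℝ) (htstar : tstar ∈ Set.Icc 0 l)
    (hmin : ∀ t ∈ Set.Icc 0 l,
      soft a1 tstar ^ 2 + ∑ i, soft (a2 i) (l - tstar) ^ 2 ≤
        soft a1 t ^ 2 + ∑ i, soft (a2 i) (l - t) ^ 2)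
    (f : ℝ × (Fin m → ℝ) → ℝ)
    (hf : ∀ b, f b = l * max |b.1| (∑ i, |b.2 i|)
      + (1 / 2) * ((b.1 - a1) ^ 2 + ∑ i, (b.2 i - a2 i) ^ 2))
    (bhat : ℝ × (Fin m → ℝ))
    (hbhat : bhat = (soft a1 tstar, fun i => soft (a2 i) (l - tstar))) :
    ∀ b, f bhat ≤ f b := by
  intro b
  obtain ⟨ht0, htl⟩ := htstar
  have hslack := mul_max_eq_of_isMinOn a1 a2 l ⟨ht0, htl⟩ (isMinOn_iff.2 hmin)
  have hprox₁ := soft_prox_le a1 ht0 b.1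
  have hprox₂ := sum_le_sum fun i (_ : i ∈ univ) => soft_prox_le (a2 i) (sub_nonneg.2 htl) (b.2 i)
  have hmax : tstar * |b.1| + (l - tstar) * ∑ i, |b.2 i| ≤ l * max |b.1| (∑ i, |b.2 i|) := by
    nlinarith [mul_le_mul_of_nonneg_left (le_max_left |b.1| (∑ i, |b.2 i|)) ht0,
      mul_le_mul_of_nonneg_left (le_max_right |b.1| (∑ i, |b.2 i|)) (sub_nonneg.2 htl)]
  simp only [sum_add_distrib, ← mul_sum] at hprox₂
  rw [hf, hf, hbhat]
  linarith

/-- if `t* ∈ [0, λ]` minimizes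
`t ↦ soft(a₁, t)² + Σᵢ soft(aᵢ, λ − t)²` over `[0, λ]`, then
`b̂ = (soft(a₁, t*), soft(a₋₁, λ − t*))` is a minimizer of the hybrid ℓ₁/ℓ_∞
proximal objective `b ↦ λ·max(|b₁|, Σᵢ|b₋₁ᵢ|) + (1/2)‖b − a‖₂²`. -/
theorem stmt_14 (m : ℕ) (l : ℝ) (hl : 0 < l)
    (a1 : ℝ) (a2 : Fin m → ℝ)
    (tstar : ℝ) (htstar : tstar ∈ Set.Icc 0 l)
    (hmin : ∀ t ∈ Set.Icc 0 l,
      soft a1 tstar ^ 2 + ∑ i, soft (a2 i) (l - tstar) ^ 2 ≤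
        soft a1 t ^ 2 + ∑ i, soft (a2 i) (l - t) ^ 2)
    (f : ℝ × (Fin m → ℝ) → ℝ)
    (hf : ∀ b, f b = l * max |b.1| (∑ i, |b.2 i|)
      + (1 / 2) * ((b.1 - a1) ^ 2 + ∑ i, (b.2 i - a2 i) ^ 2))
    (bhat : ℝ × (Fin m → ℝ))
    (hbhat : bhat = (soft a1 tstar, fun i => soft (a2 i) (l - tstar))) :
    ∀ b, f bhat ≤ f b :=
  stmt_14_general m l a1 a2 tstar htstar hmin f hf bhat hbhat
end

section
/- Let λ > 0 and let A be a real p×p matrix with a singular value decomposition A = U Σ Vᵀ, where U and V are p×p orthogonal matrices and Σ is diagonal with nonnegative diagonal entries σ_1,…,σ_p. Let B̂ = U Σ_λ Vᵀ, where Σ_λ is diagonal with entries max(σ_i − λ, 0). Then B̂ minimizes over all p×p real matrices B the nuclear-norm proximal objective λ·tr((BᵀB)^{1/2}) + (1/2)‖B − A‖₂², where (BᵀB)^{1/2} denotes the positive-semidefinite square root of BᵀB and ‖·‖₂ is the Frobenius norm. -/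
open Matrix

open scoped ComplexOrder in
/-- The square root of a positive semidefinite matrix, as `Matrix.PosSemidef.sqrt`
was defined in Mathlib (December 2024); it has since been removed. -/
noncomputable def Matrix.PosSemidef.sqrt {n 𝕜 : Type*} [Fintype n] [DecidableEq n] [RCLike 𝕜]
    {A : Matrix n n 𝕜} (hA : A.PosSemidef) : Matrix n n 𝕜 :=
  hA.1.eigenvectorUnitary.1 * diagonal ((↑) ∘ (√·) ∘ hA.1.eigenvalues) *
  (star hA.1.eigenvectorUnitary : Matrix n n 𝕜)

open scoped MatrixOrder in
lemma Matrix.PosSemidef.eq_sqrt_of_sq_eq {p : ℕ} {C M : Matrix (Fin p) (Fin p) ℝ}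
    (hC : C.PosSemidef) (hM : M.PosSemidef) (h : C ^ 2 = M) : C = hM.sqrt := by
  have h1 : hM.sqrt = CFC.sqrt M := by
    rw [CFC.sqrt_eq_cfc, cfc_nnreal_eq_real _ M (Matrix.nonneg_iff_posSemidef.mpr hM),
      hM.1.cfc_eq]
    simp [Matrix.PosSemidef.sqrt, IsHermitian.cfc, Function.comp_def, Real.coe_sqrt,
      Real.coe_toNNReal', max_eq_left (hM.eigenvalues_nonneg _)]
  rw [h1]
  exact (CFC.sqrt_unique (by rw [← h, pow_two]) (Matrix.nonneg_iff_posSemidef.mpr hC)).symm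

/-- The nuclear norm `tr((BᵀB)^{1/2})` of a real square matrix, where
`(BᵀB)^{1/2}` is the positive-semidefinite square root of `BᵀB`. -/
noncomputable def nuclearNorm {p : ℕ} (B : Matrix (Fin p) (Fin p) ℝ) : ℝ :=
  (Matrix.PosSemidef.sqrt
    (show (Bᵀ * B).PosSemidef from Matrix.posSemidef_conjTranspose_mul_self B)).trace

lemma real_conjT {p : ℕ} (X : Matrix (Fin p) (Fin p) ℝ) : Xᴴ = Xᵀ := by
  ext i j; simp [conjTranspose_apply]

lemma sandwich {p : ℕ} (W U : Matrix (Fin p) (Fin p) ℝ) (d e : Fin p → ℝ)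
    (hU : Uᵀ * U = 1) :
    W * (diagonal d * (Uᵀ * (U * (diagonal e * Wᵀ))))
      = W * (diagonal (fun i => d i * e i) * Wᵀ) := by
  rw [← mul_assoc Uᵀ U, hU, one_mul, ← mul_assoc (diagonal d), diagonal_mul_diagonal]

/-- nuclear norm of U diag d Vᵀ with orthogonal U, V and d ≥ 0 -/
lemma nuclear_svd {p : ℕ} (U V : Matrix (Fin p) (Fin p) ℝ) (d : Fin p → ℝ)
    (hU : Uᵀ * U = 1) (hV : Vᵀ * V = 1) (hd : ∀ i, 0 ≤ d i) :
    nuclearNorm (U * diagonal d * Vᵀ) = ∑ i, d i := by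
  set B := U * diagonal d * Vᵀ with hB
  have hBtB : Bᵀ * B = V * diagonal (fun i => d i * d i) * Vᵀ := by
    rw [hB]
    simp only [transpose_mul, transpose_transpose, diagonal_transpose, mul_assoc]
    rw [sandwich V U d d hU]
  set C := V * diagonal d * Vᵀ with hC
  have hCps : C.PosSemidef := by
    have h1 : (diagonal d).PosSemidef := posSemidef_diagonal_iff.mpr hd
    have h2 := h1.mul_mul_conjTranspose_same V
    rwa [real_conjT] at h2
  have hsq : C ^ 2 = Bᵀ * B := by
    rw [hBtB, pow_two, hC]
    simp only [mul_assoc]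
    rw [sandwich V V d d hV]
  have hps : (Bᵀ * B).PosSemidef := posSemidef_conjTranspose_mul_self B
  have hCsqrt : C = hps.sqrt := hCps.eq_sqrt_of_sq_eq hps hsq
  rw [nuclearNorm, ← hCsqrt, hC, trace_mul_cycle, hV, one_mul, trace_diagonal]


lemma dual_ineq {p : ℕ} (l : ℝ) (hl : 0 ≤ l) (G B : Matrix (Fin p) (Fin p) ℝ)
    (hG : ∀ x : Fin p → ℝ, (G *ᵥ x) ⬝ᵥ (G *ᵥ x) ≤ l ^ 2 * (x ⬝ᵥ x)) :
    trace (Gᵀ * B) ≤ l * nuclearNorm B := by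
  have hps : (Bᵀ * B).PosSemidef := posSemidef_conjTranspose_mul_self B
  have hH : (Bᵀ * B).IsHermitian := hps.1
  set Q : Matrix (Fin p) (Fin p) ℝ := (hH.eigenvectorUnitary : Matrix (Fin p) (Fin p) ℝ)
    with hQdef
  set d : Fin p → ℝ := hH.eigenvalues with hd
  have hdnn : ∀ i, 0 ≤ d i := fun i => hps.eigenvalues_nonneg i
  have hstar : star Q = Qᵀ := by rw [star_eq_conjTranspose, real_conjT]
  have hQ1 : Qᵀ * Q = 1 := by
    rw [← hstar]; exact (Matrix.mem_unitaryGroup_iff').mp hH.eigenvectorUnitary.2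
  have hQ2 : Q * Qᵀ = 1 := mul_eq_one_comm.mp hQ1
  have hdiag : Qᵀ * (Bᵀ * B) * Q = diagonal d := by
    have := hH.spectral_theorem
    rw [Unitary.conjStarAlgAut_apply, ← hQdef, hstar] at this
    rw [this]
    simp only [← mul_assoc, hQ1, one_mul]
    simp only [mul_assoc, hQ1, mul_one]
    simp [hd]
  have hspec : Bᵀ * B = Q * diagonal d * Qᵀ := by
    have := hH.spectral_theorem
    rw [Unitary.conjStarAlgAut_apply, ← hQdef, hstar] at this
    simpa using this
  -- nuclear norm of B equals sum of sqrt of eigenvalues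
  have hnn : nuclearNorm B = ∑ i, Real.sqrt (d i) := by
    set C := Q * diagonal (fun i => Real.sqrt (d i)) * Qᵀ with hC
    have hCps : C.PosSemidef := by
      have h1 : (diagonal (fun i => Real.sqrt (d i))).PosSemidef :=
        posSemidef_diagonal_iff.mpr (fun i => Real.sqrt_nonneg _)
      have h2 := h1.mul_mul_conjTranspose_same Q
      rwa [real_conjT] at h2
    have hsq : C ^ 2 = Bᵀ * B := by
      rw [pow_two, hC]
      simp only [mul_assoc]
      rw [sandwich Q Q _ _ hQ1, hspec,
        show (fun i => Real.sqrt (d i) * Real.sqrt (d i)) = d from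
          funext fun i => Real.mul_self_sqrt (hdnn i)]
      simp only [mul_assoc]
    have hCsqrt : C = hps.sqrt := hCps.eq_sqrt_of_sq_eq hps hsq
    rw [nuclearNorm, ← hCsqrt, hC, trace_mul_cycle, hQ1, one_mul, trace_diagonal]
  -- trace (Gᵀ B) = ∑ i ∑ j (GQ) j i * (BQ) j i
  have htr : trace (Gᵀ * B) = ∑ i, ∑ j, (G * Q) j i * (B * Q) j i := by
    have h1 : trace (Gᵀ * B) = trace ((G * Q)ᵀ * (B * Q)) := by
      rw [transpose_mul]
      rw [show Qᵀ * Gᵀ * (B * Q) = Qᵀ * (Gᵀ * B) * Q by simp only [mul_assoc]]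
      rw [trace_mul_cycle, ← mul_assoc, hQ2, one_mul]
    rw [h1]
    simp [Matrix.trace, Matrix.diag, Matrix.mul_apply, mul_comm]
  rw [htr, hnn, Finset.mul_sum]
  apply Finset.sum_le_sum
  intro i _
  -- Cauchy-Schwarz on columns
  have hb : ∑ j, (B * Q) j i * (B * Q) j i = d i := by
    have : ((B * Q)ᵀ * (B * Q)) i i = d i := by
      rw [transpose_mul, show Qᵀ * Bᵀ * (B * Q) = Qᵀ * (Bᵀ * B) * Q by
        simp only [mul_assoc], hdiag, diagonal_apply_eq]
    rw [← this, mul_apply]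
    simp
  have hg : ∑ j, (G * Q) j i * (G * Q) j i ≤ l ^ 2 := by
    have hx := hG (fun k => Q k i)
    have h1 : (G *ᵥ fun k => Q k i) = fun j => (G * Q) j i := by
      ext j; rw [mulVec, dotProduct, mul_apply]
    have h2 : ((fun k => Q k i) ⬝ᵥ (fun k => Q k i)) = 1 := by
      have : (Qᵀ * Q) i i = 1 := by rw [hQ1]; simp
      rw [← this, mul_apply, dotProduct]
      simp
    rw [h1, h2, mul_one, dotProduct] at hx
    exact hx
  have hCS : (∑ j, (G * Q) j i * (B * Q) j i) ^ 2
      ≤ (∑ j, (G * Q) j i ^ 2) * (∑ j, (B * Q) j i ^ 2) :=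
    Finset.sum_mul_sq_le_sq_mul_sq _ _ _
  have hgb : ∑ j, (G * Q) j i * (B * Q) j i
      ≤ Real.sqrt ((∑ j, (G * Q) j i ^ 2) * (∑ j, (B * Q) j i ^ 2)) := by
    calc ∑ j, (G * Q) j i * (B * Q) j i
        ≤ |∑ j, (G * Q) j i * (B * Q) j i| := le_abs_self _
      _ = Real.sqrt ((∑ j, (G * Q) j i * (B * Q) j i) ^ 2) :=
          (Real.sqrt_sq_eq_abs _).symm
      _ ≤ _ := Real.sqrt_le_sqrt hCS
  refine hgb.trans ?_
  rw [Real.sqrt_mul (by positivity)]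
  have h1 : Real.sqrt (∑ j, (G * Q) j i ^ 2) ≤ l := by
    rw [show l = Real.sqrt (l ^ 2) by rw [Real.sqrt_sq hl]]
    apply Real.sqrt_le_sqrt
    simpa only [pow_two] using hg
  have h2 : Real.sqrt (∑ j, (B * Q) j i ^ 2) = Real.sqrt (d i) := by
    congr 1
    simpa only [pow_two] using hb
  rw [h2]
  exact mul_le_mul_of_nonneg_right h1 (Real.sqrt_nonneg _) |>.trans_eq rfl

lemma ipeq {p : ℕ} (X Y : Matrix (Fin p) (Fin p) ℝ) :
    ∑ j, ∑ k, X j k * Y j k = trace (Xᵀ * Y) := by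
  rw [trace, Finset.sum_comm]
  simp [Matrix.mul_apply, Matrix.diag, mul_comm]

lemma transfer {p : ℕ} (M : Matrix (Fin p) (Fin p) ℝ) (x y : Fin p → ℝ) :
    x ⬝ᵥ (M *ᵥ y) = (Mᵀ *ᵥ x) ⬝ᵥ y := by
  rw [Matrix.dotProduct_mulVec, Matrix.mulVec_transpose]

/-- singular-value soft-thresholding `B̂ = U Σ_λ Vᵀ` minimizes the
nuclear-norm proximal objective `B ↦ λ·tr((BᵀB)^{1/2}) + (1/2)‖B − A‖₂²`. -/
theorem stmt_15 (p : ℕ) (l : ℝ) (hl : 0 < l)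
    (A U V : Matrix (Fin p) (Fin p) ℝ) (σ : Fin p → ℝ)
    (hU : Uᵀ * U = 1) (hV : Vᵀ * V = 1) (hσ : ∀ i, 0 ≤ σ i)
    (hA : A = U * diagonal σ * Vᵀ)
    (Bhat : Matrix (Fin p) (Fin p) ℝ)
    (hBhat : Bhat = U * diagonal (fun i => max (σ i - l) 0) * Vᵀ)
    (f : Matrix (Fin p) (Fin p) ℝ → ℝ)
    (hf : ∀ B, f B = l * nuclearNorm B + (1 / 2) * ∑ j, ∑ k, (B j k - A j k) ^ 2) :
    ∀ B, f Bhat ≤ f B := by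
  intro B
  set t : Fin p → ℝ := fun i => max (σ i - l) 0 with ht
  set m : Fin p → ℝ := fun i => σ i - t i with hm
  have htnn : ∀ i, 0 ≤ t i := fun i => le_max_right _ _
  have hmnn : ∀ i, 0 ≤ m i := by
    intro i; rw [hm]
    simp only [ht]
    rcases le_or_gt (σ i) l with h | h
    · rw [max_eq_right (by linarith)]; simpa using hσ i
    · rw [max_eq_left (by linarith)]; linarith
  have hml : ∀ i, m i ≤ l := by
    intro i; rw [hm]
    simp only [ht]
    rcases le_or_gt (σ i) l with h | h
    · rw [max_eq_right (by linarith)]; simpa using h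
    · rw [max_eq_left (by linarith)]; linarith
  have htm : ∀ i, t i * m i = l * t i := by
    intro i
    rcases le_or_gt (σ i) l with h | h
    · have h0 : t i = 0 := by simp only [ht]; exact max_eq_right (by linarith)
      rw [h0]; ring
    · have h1 : t i = σ i - l := by simp only [ht]; exact max_eq_left (by linarith)
      have h2 : m i = l := by show σ i - t i = l; rw [h1]; ring
      rw [h2]; ring
  set G : Matrix (Fin p) (Fin p) ℝ := U * diagonal m * Vᵀ with hGdef
  have hGA : A - Bhat = G := by
    rw [hA, hBhat, hGdef, ← sub_mul, ← mul_sub, ← diagonal_sub]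
  have hVV : V * Vᵀ = 1 := mul_eq_one_comm.mp hV
  -- operator-norm bound on G
  have hGop : ∀ x : Fin p → ℝ, (G *ᵥ x) ⬝ᵥ (G *ᵥ x) ≤ l ^ 2 * (x ⬝ᵥ x) := by
    intro x
    have hGtG : Gᵀ * G = V * (diagonal (fun i => m i * m i) * Vᵀ) := by
      rw [hGdef]
      simp only [transpose_mul, transpose_transpose, diagonal_transpose, mul_assoc]
      rw [sandwich V U m m hU]
    have e1 : (G *ᵥ x) ⬝ᵥ (G *ᵥ x) = x ⬝ᵥ ((Gᵀ * G) *ᵥ x) := by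
      rw [← mulVec_mulVec x Gᵀ G, transfer Gᵀ x (G *ᵥ x), transpose_transpose]
    rw [e1, hGtG]
    set y : Fin p → ℝ := Vᵀ *ᵥ x with hy
    have e2 : x ⬝ᵥ ((V * (diagonal (fun i => m i * m i) * Vᵀ)) *ᵥ x)
        = y ⬝ᵥ (diagonal (fun i => m i * m i) *ᵥ y) := by
      rw [← mulVec_mulVec x V _, transfer V x, hy, mulVec_mulVec]
    have e3 : y ⬝ᵥ (diagonal (fun i => m i * m i) *ᵥ y) ≤ l ^ 2 * (y ⬝ᵥ y) := by
      simp only [dotProduct, Finset.mul_sum]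
      apply Finset.sum_le_sum
      intro i _
      rw [mulVec_diagonal]
      have h1 : m i * m i ≤ l ^ 2 := by
        have := hmnn i; have := hml i; nlinarith
      have h2 : 0 ≤ y i * y i := mul_self_nonneg _
      nlinarith
    have e4 : y ⬝ᵥ y = x ⬝ᵥ x := by
      rw [hy, transfer, transpose_transpose, mulVec_mulVec, hVV, one_mulVec]
    rw [e2]
    rw [e4] at e3
    exact e3
  have hdual : trace (Gᵀ * B) ≤ l * nuclearNorm B := dual_ineq l hl.le G B hGop
  -- nuclear norm of Bhat
  have hnnBhat : nuclearNorm Bhat = ∑ i, t i := by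
    rw [hBhat]; exact nuclear_svd U V t hU hV htnn
  -- trace (Bhatᵀ G) = l * Σ t
  have htrBhat : trace (Bhatᵀ * G) = l * ∑ i, t i := by
    have h1 : Bhatᵀ * G = V * (diagonal (fun i => t i * m i) * Vᵀ) := by
      rw [hBhat, hGdef]
      simp only [transpose_mul, transpose_transpose, diagonal_transpose, mul_assoc]
      exact sandwich V U t m hU
    rw [h1, ← mul_assoc, trace_mul_cycle, hV, one_mul, trace_diagonal]
    rw [Finset.mul_sum]
    exact Finset.sum_congr rfl fun i _ => htm i
  have htrB : trace (Bᵀ * G) = trace (Gᵀ * B) := by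
    rw [← trace_transpose (Bᵀ * G), transpose_mul, transpose_transpose]
  -- quadratic expansion
  have hexp : ∑ j, ∑ k, (B j k - A j k) ^ 2
      = (∑ j, ∑ k, (B j k - Bhat j k) ^ 2)
        + 2 * (∑ j, ∑ k, (Bhat j k * G j k - B j k * G j k))
        + ∑ j, ∑ k, (Bhat j k - A j k) ^ 2 := by
    have hptw : ∀ j k, (B j k - A j k) ^ 2
        = (B j k - Bhat j k) ^ 2 + 2 * (Bhat j k * G j k - B j k * G j k)
          + (Bhat j k - A j k) ^ 2 := by
      intro j k
      have hG : G j k = A j k - Bhat j k := by rw [← hGA]; simp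
      rw [hG]; ring
    simp_rw [hptw, Finset.sum_add_distrib, Finset.mul_sum]
  have hsplit : ∑ j, ∑ k, (Bhat j k * G j k - B j k * G j k)
      = trace (Bhatᵀ * G) - trace (Bᵀ * G) := by
    rw [← ipeq Bhat G, ← ipeq B G]
    rw [← Finset.sum_sub_distrib]
    exact Finset.sum_congr rfl fun j _ => by rw [Finset.sum_sub_distrib]
  have hsq : 0 ≤ ∑ j, ∑ k, (B j k - Bhat j k) ^ 2 := by positivity
  rw [hf B, hf Bhat]
  rw [hexp, hsplit, htrBhat, htrB, hnnBhat]
  linarith [hdual]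
end

section
/- Let ρ > 0, let x_1,…,x_n ∈ ℝ^p, y_1,…,y_n ∈ ℝ, let X be the n×p matrix with i-th row x_iᵀ, let D = (1/n)·Σ_{i=1}^n y_i x_i x_iᵀ, and let A be a symmetric p×p real matrix. Set D' = D + ρA, G = ρ I_n + n^{-1}(X Xᵀ) ∘ (X Xᵀ) (which is invertible), w = G^{-1} d' where d'_i = (1/n)·x_iᵀ D' x_i, and B̂ = ρ^{-1} D' − ρ^{-1} Xᵀ diag(w) X. Then B̂ is symmetric and is the unique minimizer over all p×p real matrices B of the proximal objective (1/(2n)) Σ_{i=1}^n (y_i − x_iᵀ B x_i)² + (ρ/2)‖B − A‖₂². -/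
open Matrix

/-!
Write `Φ B = (xᵢᵀ B xᵢ)ᵢ`. For the Frobenius pairing its adjoint is `v ↦ Xᵀ diag(v) X`, and
`Φ Φ*` is the Hadamard square of the Gram matrix `X Xᵀ`, so `G = ρ I + n⁻¹ Φ Φ*` is positive
definite by the Schur product theorem. The equation `G w = d'` says exactly that `Φ B̂ = n w`,
which makes `B̂` a solution of the first-order condition `ρ (B̂ - A) = n⁻¹ Φ* (y - Φ B̂)`. As the
objective is quadratic, this gives `f B = f B̂ + (2n)⁻¹ ‖Φ (B - B̂)‖² + (ρ/2) ‖B - B̂‖²`, whence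
`B̂` is the unique minimiser.
-/

namespace Matrix

variable {ι κ R : Type*} [Fintype ι] [Fintype κ] [CommRing R]

def quadEval (X : Matrix ι κ R) : Matrix κ κ R →ₗ[R] ι → R where
  toFun B i := X i ⬝ᵥ B *ᵥ X i
  map_add' B C := by ext i; simp [add_mulVec]
  map_smul' c B := by ext i; simp [smul_mulVec]

omit [Fintype ι] in
lemma quadEval_apply (X : Matrix ι κ R) (B : Matrix κ κ R) (i : ι) :
    quadEval X B i = X i ⬝ᵥ B *ᵥ X i := rfl

lemma dotProduct_vecMulVec_self_mulVec (u v : κ → R) :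
    v ⬝ᵥ vecMulVec u u *ᵥ v = (v ⬝ᵥ u) ^ 2 := by
  simp [vecMulVec_mulVec, sq, dotProduct_comm u v]

lemma eq_of_sum_sum_sq_sub_nonpos {B C : Matrix ι κ ℝ}
    (h : ∑ j, ∑ k, (B j k - C j k) ^ 2 ≤ 0) : B = C := by
  have hrow (j : ι) : 0 ≤ ∑ k, (B j k - C j k) ^ 2 := by positivity
  have h0 := (Fintype.sum_eq_zero_iff_of_nonneg hrow).mp (le_antisymm h (by positivity))
  ext j k
  have hjk := (Fintype.sum_eq_zero_iff_of_nonneg fun k => sq_nonneg (B j k - C j k)).mp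
    (congrFun h0 j)
  exact sub_eq_zero.mp (pow_eq_zero_iff two_ne_zero |>.mp (congrFun hjk k))

noncomputable def proxObjective (X : Matrix ι κ ℝ) (y : ι → ℝ) (m ρ : ℝ) (A B : Matrix κ κ ℝ) :
    ℝ :=
  (2 * m)⁻¹ * ∑ i, (y i - quadEval X B i) ^ 2 + ρ / 2 * ∑ j, ∑ k, (B j k - A j k) ^ 2

section diagonal

variable [DecidableEq ι]

omit [Fintype κ] in
lemma transpose_mul_diagonal_mul_eq_sum (X : Matrix ι κ R) (v : ι → R) :
    Xᵀ * diagonal v * X = ∑ i, v i • vecMulVec (X i) (X i) := by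
  ext a b
  simp only [mul_apply, transpose_apply, diagonal_apply, mul_ite, mul_zero, Finset.sum_ite_eq',
    Finset.mem_univ, if_true, Matrix.sum_apply, smul_apply, vecMulVec_apply, smul_eq_mul]
  exact Finset.sum_congr rfl fun i _ => by ring

omit [Fintype κ] in
lemma transpose_transpose_mul_diagonal_mul (X : Matrix ι κ R) (v : ι → R) :
    (Xᵀ * diagonal v * X)ᵀ = Xᵀ * diagonal v * X := by
  simp [transpose_mul, Matrix.mul_assoc]

lemma sum_sum_transpose_mul_diagonal_mul_apply_mul (X : Matrix ι κ R) (v : ι → R)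
    (M : Matrix κ κ R) :
    ∑ j, ∑ k, (Xᵀ * diagonal v * X) j k * M j k = v ⬝ᵥ quadEval X M := by
  simp only [mul_apply, transpose_apply, diagonal_apply, mul_ite, mul_zero, Finset.sum_ite_eq',
    Finset.mem_univ, if_true, quadEval_apply, dotProduct, mulVec, Finset.sum_mul, Finset.mul_sum]
  rw [Finset.sum_comm_cycle]
  exact Finset.sum_congr rfl fun i _ => Finset.sum_congr rfl fun j _ =>
    Finset.sum_congr rfl fun k _ => by ring

lemma quadEval_transpose_mul_diagonal_mul (X : Matrix ι κ R) (v : ι → R) :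
    quadEval X (Xᵀ * diagonal v * X) = ((X * Xᵀ) ⊙ (X * Xᵀ)) *ᵥ v := by
  ext i
  rw [quadEval_apply, transpose_mul_diagonal_mul_eq_sum]
  simp only [sum_mulVec, smul_mulVec, dotProduct_sum, dotProduct_smul,
    dotProduct_vecMulVec_self_mulVec]
  simp only [mulVec, dotProduct, hadamard_apply, mul_apply, transpose_apply, smul_eq_mul]
  exact Finset.sum_congr rfl fun j _ => by ring

lemma posDef_smul_one_add_smul_hadamard (X : Matrix ι κ ℝ) {ρ c : ℝ} (hρ : 0 < ρ)
    (hc : 0 ≤ c) : (ρ • (1 : Matrix ι ι ℝ) + c • ((X * Xᵀ) ⊙ (X * Xᵀ))).PosDef := by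
  have hXX : (X * Xᵀ).PosSemidef := by
    simpa [conjTranspose_eq_transpose_of_trivial] using posSemidef_self_mul_conjTranspose X
  exact (PosDef.one.smul hρ).add_posSemidef ((hXX.hadamard hXX).smul hc)

def IsProxStationary (X : Matrix ι κ ℝ) (y : ι → ℝ) (m ρ : ℝ) (A B : Matrix κ κ ℝ) : Prop :=
  ρ • (B - A) = m⁻¹ • (Xᵀ * diagonal (y - quadEval X B) * X)

variable (X : Matrix ι κ ℝ) {y w : ι → ℝ} {m ρ : ℝ} {A B₀ D : Matrix κ κ ℝ}

lemma quadEval_eq_smul_of_mulVec_eq (hρ : ρ ≠ 0) (hm : m ≠ 0)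
    (hw : (ρ • 1 + m⁻¹ • ((X * Xᵀ) ⊙ (X * Xᵀ))) *ᵥ w = m⁻¹ • quadEval X D) :
    quadEval X (ρ⁻¹ • D - ρ⁻¹ • (Xᵀ * diagonal w * X)) = m • w := by
  rw [map_sub, map_smul, map_smul, quadEval_transpose_mul_diagonal_mul]
  ext i
  have hwi := congrFun hw i
  simp only [add_mulVec, smul_mulVec, one_mulVec, Pi.add_apply, Pi.smul_apply,
    smul_eq_mul] at hwi
  simp only [Pi.sub_apply, Pi.smul_apply, smul_eq_mul]
  field_simp at hwi ⊢
  linear_combination -hwi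

lemma isProxStationary_of_mulVec_eq (hρ : ρ ≠ 0) (hm : m ≠ 0)
    (hw : (ρ • 1 + m⁻¹ • ((X * Xᵀ) ⊙ (X * Xᵀ))) *ᵥ w =
      m⁻¹ • quadEval X (m⁻¹ • (Xᵀ * diagonal y * X) + ρ • A))
    (hB₀ : B₀ = ρ⁻¹ • (m⁻¹ • (Xᵀ * diagonal y * X) + ρ • A) - ρ⁻¹ • (Xᵀ * diagonal w * X)) :
    IsProxStationary X y m ρ A B₀ := by
  have hB₀w : quadEval X B₀ = m • w := hB₀ ▸ quadEval_eq_smul_of_mulVec_eq X hρ hm hw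
  have hdiag : diagonal (y - m • w) = diagonal y - m • diagonal w := by
    rw [← diagonal_smul, diagonal_sub]
    rfl
  rw [IsProxStationary, hB₀w, hdiag, Matrix.mul_sub, Matrix.sub_mul, Matrix.mul_smul,
    Matrix.smul_mul, hB₀]
  match_scalars <;> simp [hρ, hm]

lemma proxObjective_eq_add_of_isProxStationary (hB₀ : IsProxStationary X y m ρ A B₀)
    (B : Matrix κ κ ℝ) :
    proxObjective X y m ρ A B = proxObjective X y m ρ A B₀
      + (2 * m)⁻¹ * ∑ i, quadEval X (B - B₀) i ^ 2
      + ρ / 2 * ∑ j, ∑ k, (B j k - B₀ j k) ^ 2 := by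
  have hcross : ρ * ∑ j, ∑ k, (B₀ j k - A j k) * (B j k - B₀ j k)
      = m⁻¹ * ∑ i, (y i - quadEval X B₀ i) * quadEval X (B - B₀) i := by
    calc ρ * ∑ j, ∑ k, (B₀ j k - A j k) * (B j k - B₀ j k)
        = ∑ j, ∑ k, (ρ • (B₀ - A)) j k * (B - B₀) j k := by
          simp only [Finset.mul_sum, smul_apply, sub_apply, smul_eq_mul, mul_assoc]
      _ = m⁻¹ * ∑ j, ∑ k, (Xᵀ * diagonal (y - quadEval X B₀) * X) j k * (B - B₀) j k := by
          rw [hB₀]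
          simp only [Finset.mul_sum, smul_apply, smul_eq_mul, mul_assoc]
      _ = m⁻¹ * ∑ i, (y i - quadEval X B₀ i) * quadEval X (B - B₀) i := by
          rw [sum_sum_transpose_mul_diagonal_mul_apply_mul]
          rfl
  have hfit : ∑ i, (y i - quadEval X B i) ^ 2 = ∑ i, (y i - quadEval X B₀ i) ^ 2
      - 2 * ∑ i, (y i - quadEval X B₀ i) * quadEval X (B - B₀) i
      + ∑ i, quadEval X (B - B₀) i ^ 2 := by
    rw [Finset.mul_sum, ← Finset.sum_sub_distrib, ← Finset.sum_add_distrib]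
    refine Finset.sum_congr rfl fun i _ => ?_
    rw [map_sub, Pi.sub_apply]
    ring
  have hprox : ∑ j, ∑ k, (B j k - A j k) ^ 2 = ∑ j, ∑ k, (B₀ j k - A j k) ^ 2
      + 2 * ∑ j, ∑ k, (B₀ j k - A j k) * (B j k - B₀ j k)
      + ∑ j, ∑ k, (B j k - B₀ j k) ^ 2 := by
    simp only [Finset.mul_sum, ← Finset.sum_add_distrib]
    refine Finset.sum_congr rfl fun j _ => Finset.sum_congr rfl fun k _ => ?_
    ring
  rw [proxObjective, proxObjective, hfit, hprox]
  linear_combination hcross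

lemma proxObjective_le_of_isProxStationary (hm : 0 ≤ m) (hρ : 0 ≤ ρ)
    (hB₀ : IsProxStationary X y m ρ A B₀) (B : Matrix κ κ ℝ) :
    proxObjective X y m ρ A B₀ ≤ proxObjective X y m ρ A B := by
  rw [proxObjective_eq_add_of_isProxStationary X hB₀ B]
  have hfit : 0 ≤ (2 * m)⁻¹ * ∑ i, quadEval X (B - B₀) i ^ 2 := by positivity
  have hprox : 0 ≤ ρ / 2 * ∑ j, ∑ k, (B j k - B₀ j k) ^ 2 := by positivity
  linarith

lemma eq_of_proxObjective_le_of_isProxStationary (hm : 0 ≤ m) (hρ : 0 < ρ)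
    (hB₀ : IsProxStationary X y m ρ A B₀) {B : Matrix κ κ ℝ}
    (hB : proxObjective X y m ρ A B ≤ proxObjective X y m ρ A B₀) : B = B₀ := by
  rw [proxObjective_eq_add_of_isProxStationary X hB₀ B] at hB
  have hfit : 0 ≤ (2 * m)⁻¹ * ∑ i, quadEval X (B - B₀) i ^ 2 := by positivity
  refine eq_of_sum_sum_sq_sub_nonpos (nonpos_of_mul_nonpos_right ?_ (half_pos hρ))
  linarith

end diagonal

end Matrix

/-- the proximal operator of the quadratic-regression squared loss:
with `D' = D + ρA`, `B̂ = ρ⁻¹ D' − ρ⁻¹ Xᵀ diag(w) X` is symmetric and is the unique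
minimizer of `B ↦ (1/(2n)) Σᵢ (yᵢ − xᵢᵀ B xᵢ)² + (ρ/2)‖B − A‖₂²`. -/
theorem stmt_17 (n p : ℕ) (hn : 0 < n) (ρ : ℝ) (hρ : 0 < ρ)
    (x : Fin n → Fin p → ℝ) (y : Fin n → ℝ)
    (X : Matrix (Fin n) (Fin p) ℝ) (hX : ∀ i j, X i j = x i j)
    (D : Matrix (Fin p) (Fin p) ℝ)
    (hD : D = (n : ℝ)⁻¹ • ∑ i, y i • vecMulVec (x i) (x i))
    (A : Matrix (Fin p) (Fin p) ℝ) (hA : Aᵀ = A)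
    (D' : Matrix (Fin p) (Fin p) ℝ) (hD' : D' = D + ρ • A)
    (G : Matrix (Fin n) (Fin n) ℝ)
    (hG : G = ρ • (1 : Matrix (Fin n) (Fin n) ℝ) +
      (n : ℝ)⁻¹ • ((X * Xᵀ).hadamard (X * Xᵀ)))
    (w : Fin n → ℝ)
    (hw : w = G⁻¹.mulVec (fun i => (n : ℝ)⁻¹ * (x i ⬝ᵥ D'.mulVec (x i))))
    (Bhat : Matrix (Fin p) (Fin p) ℝ)
    (hB : Bhat = ρ⁻¹ • D' - ρ⁻¹ • (Xᵀ * diagonal w * X))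
    (f : Matrix (Fin p) (Fin p) ℝ → ℝ)
    (hf : ∀ B, f B = (2 * n : ℝ)⁻¹ * ∑ i, (y i - x i ⬝ᵥ B.mulVec (x i)) ^ 2
      + (ρ / 2) * ∑ j, ∑ k, (B j k - A j k) ^ 2) :
    IsUnit G.det ∧ Bhatᵀ = Bhat ∧ (∀ B, f Bhat ≤ f B) ∧
      (∀ B, (∀ C, f B ≤ f C) → B = Bhat) := by
  obtain rfl : X = x := funext₂ hX
  have hn' : (n : ℝ) ≠ 0 := Nat.cast_ne_zero.mpr hn.ne'
  rw [← transpose_mul_diagonal_mul_eq_sum] at hD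
  subst hD hD'
  have hdet : IsUnit G.det := by
    rw [← isUnit_iff_isUnit_det, hG]
    exact (posDef_smul_one_add_smul_hadamard X hρ (by positivity)).isUnit
  have hsystem : G *ᵥ w = (n : ℝ)⁻¹ • quadEval X ((n : ℝ)⁻¹ • (Xᵀ * diagonal y * X) + ρ • A) := by
    rw [hw, mulVec_mulVec, mul_nonsing_inv _ hdet, one_mulVec]
    rfl
  subst hG
  have hstat := isProxStationary_of_mulVec_eq X hρ.ne' hn' hsystem hB
  obtain rfl : f = proxObjective X y n ρ A := funext hf
  refine ⟨hdet, ?_, proxObjective_le_of_isProxStationary X (Nat.cast_nonneg n) hρ.le hstat,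
    fun B hmin => eq_of_proxObjective_le_of_isProxStationary X (Nat.cast_nonneg n) hρ hstat
      (hmin Bhat)⟩
  rw [hB]
  simp only [transpose_sub, transpose_smul, transpose_add, transpose_transpose_mul_diagonal_mul,
    hA]
end
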